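/- arXiv:0710.2758 — 8 statements merged into one kernel-verified Lean document; each statement's English description precedes it below -/
import Mathlib

section
/- A trading strategy (α,β) satisfies the self-financing condition ϑ_t(ϱ_t(α_t) − α_{t+1}, β_t − β_{t+1}) ≥ 0 if and only if for all x ∈ [S^b_t, S^a_t] and all R ∈ [R^d_t, R^c_t] one has α_t R + β_t x ≥ α_{t+1} + β_{t+1} x. -/
/-! A long position `z` is marked at the bid and a short one at the ask, so
`z⁺ · bid − z⁻ · ask` is the smallest value of the linear map `y ↦ z y` on `[bid, ask]`,
attained at an endpoint. Both `ϱ_t` and the `ζ`-part of `ϑ_t` have this form, so the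
self-financing inequality says exactly that the minimum over the rectangle
`[R^d, R^c] × [S^b, S^a]` of `(α_t R − α_{t+1}) + (β_t − β_{t+1}) x` is nonnegative. -/

open Set

/-- `ϱ_t = liquidationValue R^d R^c` and `ϑ_t (ξ, ζ) = ξ + liquidationValue S^b S^a ζ`. -/
def liquidationValue (bid ask z : ℝ) : ℝ :=
  max z 0 * bid - max (-z) 0 * ask

theorem liquidationValue_le_mul (z : ℝ) {bid ask y : ℝ} (hy : y ∈ Icc bid ask) :
    liquidationValue bid ask z ≤ z * y := by
  unfold liquidationValue
  rcases le_total 0 z with hz | hz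
  · rw [max_eq_left hz, max_eq_right (neg_nonpos.2 hz)]
    nlinarith [hy.1]
  · rw [max_eq_right hz, max_eq_left (neg_nonneg.2 hz)]
    nlinarith [hy.2]

theorem exists_mem_Icc_mul_eq_liquidationValue (z : ℝ) {bid ask : ℝ} (h : bid ≤ ask) :
    ∃ y ∈ Icc bid ask, z * y = liquidationValue bid ask z := by
  unfold liquidationValue
  rcases le_total 0 z with hz | hz
  · refine ⟨bid, left_mem_Icc.2 h, ?_⟩
    rw [max_eq_left hz, max_eq_right (neg_nonpos.2 hz)]
    ring
  · refine ⟨ask, right_mem_Icc.2 h, ?_⟩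
    rw [max_eq_right hz, max_eq_left (neg_nonneg.2 hz)]
    ring

theorem selfFinancing_iff_wedge_general (Sb Sa Rd Rc αt αt1 βt βt1 : ℝ)
    (hba : Sb ≤ Sa) (hdc : Rd ≤ Rc) :
    0 ≤ (max αt 0 * Rd - max (-αt) 0 * Rc - αt1)
        + max (βt - βt1) 0 * Sb - max (-(βt - βt1)) 0 * Sa ↔
      ∀ x ∈ Set.Icc Sb Sa, ∀ R ∈ Set.Icc Rd Rc,
        αt1 + βt1 * x ≤ αt * R + βt * x := by
  have hvalue : (max αt 0 * Rd - max (-αt) 0 * Rc - αt1)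
      + max (βt - βt1) 0 * Sb - max (-(βt - βt1)) 0 * Sa
      = liquidationValue Rd Rc αt - αt1 + liquidationValue Sb Sa (βt - βt1) := by
    unfold liquidationValue; ring
  rw [hvalue]
  constructor
  · intro h x hx R hR
    linarith [liquidationValue_le_mul αt hR, liquidationValue_le_mul (βt - βt1) hx]
  · intro h
    obtain ⟨R, hR, hαR⟩ := exists_mem_Icc_mul_eq_liquidationValue αt hdc
    obtain ⟨x, hx, hβx⟩ := exists_mem_Icc_mul_eq_liquidationValue (βt - βt1) hba
    linarith [h x hx R hR]

/-- A trading strategy satisfies the self-financing condition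
`ϑ_t(ϱ_t(α_t) − α_{t+1}, β_t − β_{t+1}) ≥ 0` iff for all `x ∈ [S^b, S^a]` and
`R ∈ [R^d, R^c]` one has `α_t R + β_t x ≥ α_{t+1} + β_{t+1} x`. -/
theorem selfFinancing_iff_wedge (Sb Sa Rd Rc αt αt1 βt βt1 : ℝ)
    (hSb : 0 < Sb) (hba : Sb ≤ Sa) (hRd : 0 < Rd) (hdc : Rd ≤ Rc) :
    0 ≤ (max αt 0 * Rd - max (-αt) 0 * Rc - αt1)
        + max (βt - βt1) 0 * Sb - max (-(βt - βt1)) 0 * Sa ↔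
      ∀ x ∈ Set.Icc Sb Sa, ∀ R ∈ Set.Icc Rd Rc,
        αt1 + βt1 * x ≤ αt * R + βt * x :=
  selfFinancing_iff_wedge_general Sb Sa Rd Rc αt αt1 βt βt1 hba hdc
end

section
/- For any martingale triple (P,S,R) with deflator B_t = ∏_{s≤t} R_s and any self-financing trading strategy (α,β), the process t ↦ (1/B_t)(α_t R_t + β_t S_t) is a supermartingale under P. -/
/-!
Write `B` for the deflator, `M = S / B` for the discounted price and `V` for the discounted wealth.
Since `B (t + 1) = B t * R (t + 1)` and `α (t + 1)`, `β (t + 1)`, `B t` are `ℱ t`-measurable,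
`V (t + 1) = α (t + 1) / B t + β (t + 1) * M (t + 1)`, whose conditional expectation given `ℱ t`
is `(α (t + 1) + β (t + 1) * S t) / B t` by the martingale property of `M`. The self-financing
inequality at the admissible prices `x = S t`, `r = R t` bounds this by `V t`.
-/

open MeasureTheory Finset

namespace MeasureTheory

variable {Ω : Type*} {m0 : MeasurableSpace Ω} {μ : Measure Ω}

theorem StronglyMeasurable.integrable_of_finite [Finite Ω] [IsFiniteMeasure μ]
    {E : Type*} [NormedAddCommGroup E] {f : Ω → E} (hf : StronglyMeasurable f) :
    Integrable f μ :=
  ⟨hf.aestronglyMeasurable, .of_finite⟩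

theorem StronglyAdapted.prod_range {M : Type*} [CommMonoid M] [TopologicalSpace M]
    [ContinuousMul M] {ℱ : Filtration ℕ m0} {R : ℕ → Ω → M} (hR : StronglyAdapted ℱ R) :
    StronglyAdapted ℱ fun t ω => ∏ s ∈ range (t + 1), R s ω := fun _ =>
  Finset.stronglyMeasurable_fun_prod _ fun _ hs =>
    hR.stronglyMeasurable_le (Nat.lt_succ_iff.mp (mem_range.mp hs))

theorem Martingale.condExp_add_mul_ae_eq {ι : Type*} [Preorder ι] {ℱ : Filtration ι m0}
    {M : ι → Ω → ℝ} (hM : Martingale M ℱ μ) {i j : ι} (hij : i ≤ j)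
    [SigmaFinite (μ.trim (ℱ.le i))] {a b : Ω → ℝ}
    (ha : StronglyMeasurable[ℱ i] a) (ha_int : Integrable a μ)
    (hb : StronglyMeasurable[ℱ i] b) (hbM_int : Integrable (b * M j) μ) :
    μ[a + b * M j | ℱ i] =ᵐ[μ] a + b * M i := by
  have hbM : μ[b * M j | ℱ i] =ᵐ[μ] b * M i := by
    filter_upwards [condExp_mul_of_stronglyMeasurable_left hb hbM_int (hM.integrable j),
      hM.condExp_ae_eq hij] with ω hω hMω
    rw [hω, Pi.mul_apply, hMω, Pi.mul_apply]
  filter_upwards [condExp_add ha_int hbM_int (ℱ i), hbM] with ω hω hbMω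
  rw [hω, Pi.add_apply, condExp_of_stronglyMeasurable (ℱ.le i) ha ha_int, hbMω, Pi.add_apply]

theorem supermartingale_of_succ_eq_add_mul [IsFiniteMeasure μ] {ℱ : Filtration ℕ m0}
    {V M a b : ℕ → Ω → ℝ} (hM : Martingale M ℱ μ) (hV : StronglyAdapted ℱ V)
    (hV_int : ∀ t, Integrable (V t) μ)
    (ha : ∀ t, StronglyMeasurable[ℱ t] (a t)) (ha_int : ∀ t, Integrable (a t) μ)
    (hb : ∀ t, StronglyMeasurable[ℱ t] (b t)) (hbM_int : ∀ t, Integrable (b t * M (t + 1)) μ)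
    (hsucc : ∀ t, V (t + 1) = a t + b t * M (t + 1)) (hle : ∀ t, a t + b t * M t ≤ᵐ[μ] V t) :
    Supermartingale V ℱ μ :=
  supermartingale_nat hV hV_int fun t => by
    rw [hsucc]
    exact (hM.condExp_add_mul_ae_eq t.le_succ (ha t) (ha_int t) (hb t) (hbM_int t)).trans_le
      (hle t)

end MeasureTheory

theorem discounted_wealth_supermartingale_general
    {Ω : Type*} [Fintype Ω] {m0 : MeasurableSpace Ω}
    (ℱ : Filtration ℕ m0) (P : Measure Ω) [IsProbabilityMeasure P]
    (Sb Sa S Rd Rc R α β : ℕ → Ω → ℝ)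
    (hRd : ∀ t ω, 0 < Rd t ω)
    (hSbd : ∀ t ω, Sb t ω ≤ S t ω ∧ S t ω ≤ Sa t ω)
    (hRbd : ∀ t ω, Rd t ω ≤ R t ω ∧ R t ω ≤ Rc t ω)
    (hSadapt : Adapted ℱ S)
    (hR0 : StronglyMeasurable[ℱ 0] (R 0))
    (hRpred : ∀ t, StronglyMeasurable[ℱ t] (R (t + 1)))
    (hα0 : StronglyMeasurable[ℱ 0] (α 0))
    (hαpred : ∀ t, StronglyMeasurable[ℱ t] (α (t + 1)))
    (hβpred : ∀ t, StronglyMeasurable[ℱ t] (β (t + 1)))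
    (hβ0 : β 0 = 0)
    (hsf : ∀ t ω, ∀ x ∈ Set.Icc (Sb t ω) (Sa t ω), ∀ r ∈ Set.Icc (Rd t ω) (Rc t ω),
      α (t + 1) ω + β (t + 1) ω * x ≤ α t ω * r + β t ω * x)
    (hmart : Martingale
      (fun t ω => S t ω / ∏ s ∈ Finset.range (t + 1), R s ω) ℱ P) :
    Supermartingale
      (fun t ω => (α t ω * R t ω + β t ω * S t ω) / ∏ s ∈ Finset.range (t + 1), R s ω)
      ℱ P := by
  have hR : StronglyAdapted ℱ R :=
    (IsStronglyPredictable.of_measurable_add_one hR0 hRpred).stronglyAdapted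
  have hα : StronglyAdapted ℱ α :=
    (IsStronglyPredictable.of_measurable_add_one hα0 hαpred).stronglyAdapted
  have hβ : StronglyAdapted ℱ β :=
    (IsStronglyPredictable.of_measurable_add_one (hβ0 ▸ stronglyMeasurable_const)
      hβpred).stronglyAdapted
  have hS : StronglyAdapted ℱ S := hSadapt.stronglyAdapted
  set B : ℕ → Ω → ℝ := fun t ω => ∏ s ∈ range (t + 1), R s ω
  have hB : StronglyAdapted ℱ B := hR.prod_range
  have hR_pos t ω : 0 < R t ω := (hRd t ω).trans_le (hRbd t ω).1
  have hB_pos t ω : 0 < B t ω := prod_pos fun s _ => hR_pos s ω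
  have hV : StronglyAdapted ℱ fun t ω => (α t ω * R t ω + β t ω * S t ω) / B t ω := fun t =>
    (((hα t).mul (hR t)).add ((hβ t).mul (hS t))).div₀ (hB t) fun ω => (hB_pos t ω).ne'
  have ha t : StronglyMeasurable[ℱ t] fun ω => α (t + 1) ω / B t ω :=
    (hαpred t).div₀ (hB t) fun ω => (hB_pos t ω).ne'
  refine supermartingale_of_succ_eq_add_mul hmart hV
    (fun t => ((hV t).mono (ℱ.le t)).integrable_of_finite) ha
    (fun t => ((ha t).mono (ℱ.le t)).integrable_of_finite) hβpred
    (fun t => (((hβpred t).mono (ℱ.le t)).mul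
      hmart.stronglyAdapted.stronglyMeasurable).integrable_of_finite)
    (fun t => ?_) (fun t => ae_of_all _ fun ω => ?_)
  · funext ω
    have hB_succ : ∏ s ∈ range (t + 1 + 1), R s ω = B t ω * R (t + 1) ω := prod_range_succ _ _
    simp only [Pi.add_apply, Pi.mul_apply, hB_succ]
    field_simp [(hB_pos t ω).ne', (hR_pos (t + 1) ω).ne']
  · calc α (t + 1) ω / B t ω + β (t + 1) ω * (S t ω / B t ω)
        = (α (t + 1) ω + β (t + 1) ω * S t ω) / B t ω := by field_simp
      _ ≤ (α t ω * R t ω + β t ω * S t ω) / B t ω :=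
        div_le_div_of_nonneg_right (hsf t ω _ (hSbd t ω) _ (hRbd t ω)) (hB_pos t ω).le

/-- For a martingale triple `(P, S, R)` with deflator `B_t = ∏_{s ≤ t} R_s` and any
self-financing strategy `(α, β)`, the process `t ↦ (α_t R_t + β_t S_t) / B_t` is a
supermartingale under `P`. -/
theorem discounted_wealth_supermartingale
    {Ω : Type*} [Fintype Ω] {m0 : MeasurableSpace Ω}
    (ℱ : Filtration ℕ m0) (P : Measure Ω) [IsProbabilityMeasure P]
    (Sb Sa S Rd Rc R α β : ℕ → Ω → ℝ)
    (hSb : ∀ t ω, 0 < Sb t ω) (hba : ∀ t ω, Sb t ω ≤ Sa t ω)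
    (hRd : ∀ t ω, 0 < Rd t ω) (hdc : ∀ t ω, Rd t ω ≤ Rc t ω)
    (hSbd : ∀ t ω, Sb t ω ≤ S t ω ∧ S t ω ≤ Sa t ω)
    (hRbd : ∀ t ω, Rd t ω ≤ R t ω ∧ R t ω ≤ Rc t ω)
    (hSadapt : Adapted ℱ S)
    (hR0 : StronglyMeasurable[ℱ 0] (R 0))
    (hRpred : ∀ t, StronglyMeasurable[ℱ t] (R (t + 1)))
    (hα0 : StronglyMeasurable[ℱ 0] (α 0))
    (hαpred : ∀ t, StronglyMeasurable[ℱ t] (α (t + 1)))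
    (hβpred : ∀ t, StronglyMeasurable[ℱ t] (β (t + 1)))
    (hβ0 : β 0 = 0)
    (hsf : ∀ t ω, ∀ x ∈ Set.Icc (Sb t ω) (Sa t ω), ∀ r ∈ Set.Icc (Rd t ω) (Rc t ω),
      α (t + 1) ω + β (t + 1) ω * x ≤ α t ω * r + β t ω * x)
    (hmart : Martingale
      (fun t ω => S t ω / ∏ s ∈ Finset.range (t + 1), R s ω) ℱ P) :
    Supermartingale
      (fun t ω => (α t ω * R t ω + β t ω * S t ω) / ∏ s ∈ Finset.range (t + 1), R s ω)
      ℱ P :=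
  discounted_wealth_supermartingale_general ℱ P Sb Sa S Rd Rc R α β hRd hSbd hRbd hSadapt hR0 hRpred
    hα0 hαpred hβpred hβ0 hsf hmart
end

section
/- If there exists an equivalent martingale triple (P,S,R) (P equivalent to the reference measure Q, S^b ≤ S ≤ S^a, R^d ≤ R ≤ R^c, and S/B a P-martingale with B_t = ∏_{s≤t} R_s), then the model admits no arbitrage: there is no self-financing strategy (α,β) with α_0 ≤ 0, terminal liquidation value ϑ_T(α_{T+1}, β_{T+1}) ≥ 0, and Q(ϑ_T(α_{T+1}, β_{T+1}) > 0) > 0. -/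
/-! Discount by the bank account `B_t = ∏_{s ≤ t} R_s` and compare a self-financing strategy
with the frictionless market at the martingale prices `(S, R)`. Trading at `S^b ≤ S ≤ S^a` and
borrowing/lending at `R^d ≤ R ≤ R^c` is never better than trading at `S` and `R`, so the
discounted wealth `W_t = (α_{t+1} + β_{t+1} S_t) / B_t` grows at most by the martingale increment
`β_{t+1} (S_{t+1}/B_{t+1} - S_t/B_t)`, which has zero `P`-mean as `β_{t+1}` is `ℱ_t`-measurable.
Hence `E_P[W_T] ≤ E_P[W_0] ≤ 0` as `W_0 ≤ α_0 ≤ 0`, while an arbitrage would give `W_T ≥ 0`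
with `P(W_T > 0) > 0` because `Q ≪ P`. -/

open MeasureTheory Finset

lemma max_mul_sub_max_neg_mul_le_mul {lo hi c x : ℝ} (hlo : lo ≤ c) (hhi : c ≤ hi) :
    max x 0 * lo - max (-x) 0 * hi ≤ x * c := by
  rcases le_total x 0 with hx | hx
  · rw [max_eq_right hx, max_eq_left (neg_nonneg.mpr hx)]
    nlinarith
  · rw [max_eq_left hx, max_eq_right (neg_nonpos.mpr hx)]
    nlinarith

lemma add_mul_le_of_selfFinancing {a a' b b' r rd rc s sb sa : ℝ}
    (hr : rd ≤ r ∧ r ≤ rc) (hs : sb ≤ s ∧ s ≤ sa)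
    (hsf : 0 ≤ (max a 0 * rd - max (-a) 0 * rc - a') + max (b - b') 0 * sb
      - max (-(b - b')) 0 * sa) :
    a' + b' * s ≤ a * r + b * s := by
  have hcash := max_mul_sub_max_neg_mul_le_mul (x := a) hr.1 hr.2
  have hstock := max_mul_sub_max_neg_mul_le_mul (x := b - b') hs.1 hs.2
  linarith [sub_mul b b' s]

lemma div_mul_le_div_add_mul_sub {x a b s s' B r : ℝ} (hB : 0 < B) (hr : 0 < r)
    (hx : x ≤ a * r + b * s') :
    x / (B * r) ≤ (a + b * s) / B + b * (s' / (B * r) - s / B) := by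
  have hrhs : (a + b * s) / B + b * (s' / (B * r) - s / B) = (a * r + b * s') / (B * r) := by
    field_simp
    ring
  rw [hrhs]
  exact div_le_div_of_nonneg_right hx (mul_pos hB hr).le

lemma integral_pos_of_absolutelyContinuous {Ω : Type*} {m0 : MeasurableSpace Ω}
    {Q P : Measure Ω} (hQP : Q ≪ P) {f : Ω → ℝ} (hf : 0 ≤ f) (hfi : Integrable f P)
    (hQ : 0 < Q {ω | 0 < f ω}) :
    0 < ∫ ω, f ω ∂P := by
  rw [integral_pos_iff_support_of_nonneg hf hfi]
  have hP : 0 < P {ω | 0 < f ω} := pos_of_ne_zero fun h => hQ.ne' (hQP h)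
  exact hP.trans_le (measure_mono fun ω (hω : 0 < f ω) => hω.ne')

namespace MeasureTheory.Martingale

variable {Ω : Type*} {m0 : MeasurableSpace Ω} {ℱ : Filtration ℕ m0} {μ : Measure Ω}
  [IsFiniteMeasure μ] {M : ℕ → Ω → ℝ}

lemma condExp_sub_ae_eq_zero (hM : Martingale M ℱ μ) (n : ℕ) :
    μ[M (n + 1) - M n | ℱ n] =ᵐ[μ] 0 := by
  have hMn : μ[M n | ℱ n] = M n :=
    condExp_of_stronglyMeasurable (ℱ.le n) (hM.stronglyAdapted n) (hM.integrable n)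
  filter_upwards [condExp_sub (hM.integrable (n + 1)) (hM.integrable n) (ℱ n),
    hM.condExp_ae_eq n.le_succ] with ω hsub hsucc
  simp only [hsub, Pi.sub_apply, hsucc, hMn, sub_self, Pi.zero_apply]

lemma integral_mul_sub_eq_zero (hM : Martingale M ℱ μ) {n : ℕ} {ξ : Ω → ℝ}
    (hξ : StronglyMeasurable[ℱ n] ξ)
    (hξM : Integrable (fun ω => ξ ω * (M (n + 1) ω - M n ω)) μ) :
    ∫ ω, ξ ω * (M (n + 1) ω - M n ω) ∂μ = 0 := calc
  _ = ∫ ω, μ[ξ * (M (n + 1) - M n) | ℱ n] ω ∂μ := (integral_condExp (ℱ.le n)).symm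
  _ = ∫ ω, (ξ * μ[M (n + 1) - M n | ℱ n]) ω ∂μ := integral_congr_ae <|
        condExp_mul_of_stronglyMeasurable_left hξ hξM
          ((hM.integrable (n + 1)).sub (hM.integrable n))
  _ = 0 := by
        rw [integral_congr_ae (hM.condExp_sub_ae_eq_zero n).mul_left]
        simp

lemma integral_le_of_le_add_mul_sub (hM : Martingale M ℱ μ) {W ξ : ℕ → Ω → ℝ} {T : ℕ}
    (hξ : ∀ t < T, StronglyMeasurable[ℱ t] (ξ (t + 1)))
    (hW : ∀ t, Integrable (W t) μ)
    (hξM : ∀ t, Integrable (fun ω => ξ (t + 1) ω * (M (t + 1) ω - M t ω)) μ)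
    (hstep : ∀ t < T, ∀ ω, W (t + 1) ω ≤ W t ω + ξ (t + 1) ω * (M (t + 1) ω - M t ω)) :
    ∫ ω, W T ω ∂μ ≤ ∫ ω, W 0 ω ∂μ := by
  induction T with
  | zero => exact le_rfl
  | succ T ih =>
    calc ∫ ω, W (T + 1) ω ∂μ
        ≤ ∫ ω, W T ω + ξ (T + 1) ω * (M (T + 1) ω - M T ω) ∂μ :=
          integral_mono (hW _) ((hW T).add (hξM T)) (hstep T T.lt_succ_self)
      _ = ∫ ω, W T ω ∂μ := by
          rw [integral_add (hW T) (hξM T), hM.integral_mul_sub_eq_zero (hξ T T.lt_succ_self)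
            (hξM T), add_zero]
      _ ≤ ∫ ω, W 0 ω ∂μ :=
          ih (fun t ht => hξ t (ht.trans T.lt_succ_self))
            (fun t ht => hstep t (ht.trans T.lt_succ_self))

end MeasureTheory.Martingale

theorem emt_implies_no_arbitrage_general
    {Ω : Type*} [Fintype Ω] {m0 : MeasurableSpace Ω}
    [MeasurableSingletonClass Ω]
    (ℱ : Filtration ℕ m0) (T : ℕ)
    (Q P : Measure Ω) [IsProbabilityMeasure P] (hQP : Q ≪ P)
    (Sb Sa S Rd Rc R : ℕ → Ω → ℝ)
    (hRd : ∀ t ω, 0 < Rd t ω)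
    (hSbd : ∀ t ω, Sb t ω ≤ S t ω ∧ S t ω ≤ Sa t ω)
    (hRbd : ∀ t ω, Rd t ω ≤ R t ω ∧ R t ω ≤ Rc t ω)
    (hmart : Martingale
      (fun t ω => S t ω / ∏ s ∈ Finset.range (t + 1), R s ω) ℱ P) :
    ¬ ∃ α β : ℕ → Ω → ℝ,
      β 0 = 0 ∧ β (T + 1) = 0 ∧
      (∀ t ≤ T, StronglyMeasurable[ℱ t] (α (t + 1)) ∧
        StronglyMeasurable[ℱ t] (β (t + 1))) ∧
      -- self-financing: ϑ_t(ϱ_t(α_t) − α_{t+1}, β_t − β_{t+1}) ≥ 0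
      (∀ t ≤ T, ∀ ω,
        0 ≤ (max (α t ω) 0 * Rd t ω - max (-(α t ω)) 0 * Rc t ω - α (t + 1) ω)
          + max (β t ω - β (t + 1) ω) 0 * Sb t ω
          - max (-(β t ω - β (t + 1) ω)) 0 * Sa t ω) ∧
      -- liquidation convention: α_{T+1} = ϑ_T(ϱ_T(α_T), β_T)
      (∀ ω, α (T + 1) ω =
        (max (α T ω) 0 * Rd T ω - max (-(α T ω)) 0 * Rc T ω)
          + max (β T ω) 0 * Sb T ω - max (-(β T ω)) 0 * Sa T ω) ∧
      (∀ ω, α 0 ω ≤ 0) ∧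
      (∀ ω, 0 ≤ α (T + 1) ω + max (β (T + 1) ω) 0 * Sb T ω
        - max (-(β (T + 1) ω)) 0 * Sa T ω) ∧
      0 < Q {ω | 0 < α (T + 1) ω + max (β (T + 1) ω) 0 * Sb T ω
        - max (-(β (T + 1) ω)) 0 * Sa T ω} := by
  rintro ⟨α, β, hβ0, hβT, hmeas, hsf, -, hα0, hfin_nonneg, hfin_pos⟩
  have hR t ω : 0 < R t ω := (hRd t ω).trans_le (hRbd t ω).1
  set B : ℕ → Ω → ℝ := fun t ω => ∏ s ∈ range (t + 1), R s ω
  have hB t ω : 0 < B t ω := prod_pos fun s _ => hR s ω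
  have hbudget : ∀ t ≤ T, ∀ ω,
      α (t + 1) ω + β (t + 1) ω * S t ω ≤ α t ω * R t ω + β t ω * S t ω :=
    fun t ht ω => add_mul_le_of_selfFinancing (hRbd t ω) (hSbd t ω) (hsf t ht ω)
  set W : ℕ → Ω → ℝ := fun t ω => (α (t + 1) ω + β (t + 1) ω * S t ω) / B t ω
  have hW0 ω : W 0 ω ≤ 0 := by
    refine div_nonpos_of_nonpos_of_nonneg ((hbudget 0 T.zero_le ω).trans ?_) (hB 0 ω).le
    simpa [hβ0] using mul_nonpos_of_nonpos_of_nonneg (hα0 ω) (hR 0 ω).le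
  have hstep : ∀ t < T, ∀ ω,
      W (t + 1) ω ≤
        W t ω + β (t + 1) ω * (S (t + 1) ω / B (t + 1) ω - S t ω / B t ω) := by
    intro t ht ω
    simp only [W, B, prod_range_succ _ (t + 1)]
    exact div_mul_le_div_add_mul_sub (hB t ω) (hR (t + 1) ω) (hbudget (t + 1) ht ω)
  have hWT ω : W T ω = α (T + 1) ω / B T ω := by simp [W, hβT]
  simp only [hβT, Pi.zero_apply, neg_zero, max_self, zero_mul, add_zero, sub_zero]
    at hfin_nonneg hfin_pos
  have hpos : 0 < ∫ ω, W T ω ∂P := by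
    refine integral_pos_of_absolutelyContinuous hQP (fun ω => ?_) .of_finite ?_
    · simpa [hWT] using div_nonneg (hfin_nonneg ω) (hB T ω).le
    · simpa only [hWT, div_pos_iff_of_pos_right (hB _ _)] using hfin_pos
  have hmono := hmart.integral_le_of_le_add_mul_sub (fun t ht => (hmeas t ht.le).2)
    (fun _ => .of_finite) (fun _ => .of_finite) hstep
  linarith [integral_nonpos (μ := P) hW0]

/-- If there exists an equivalent martingale triple `(P, S, R)` then the model admits
no arbitrage. -/
theorem emt_implies_no_arbitrage
    {Ω : Type*} [Fintype Ω] [Nonempty Ω] {m0 : MeasurableSpace Ω}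
    [MeasurableSingletonClass Ω]
    (ℱ : Filtration ℕ m0) (T : ℕ)
    (Q P : Measure Ω) [IsProbabilityMeasure Q] [IsProbabilityMeasure P]
    (hQfull : ∀ ω, 0 < Q {ω}) (hPQ : P ≪ Q) (hQP : Q ≪ P)
    (Sb Sa S Rd Rc R : ℕ → Ω → ℝ)
    (hSb : ∀ t ω, 0 < Sb t ω) (hba : ∀ t ω, Sb t ω ≤ Sa t ω)
    (hRd : ∀ t ω, 0 < Rd t ω) (hdc : ∀ t ω, Rd t ω ≤ Rc t ω)
    (hSadapt : Adapted ℱ S)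
    (hRpred : ∀ t, StronglyMeasurable[ℱ t] (R (t + 1)))
    (hSbd : ∀ t ω, Sb t ω ≤ S t ω ∧ S t ω ≤ Sa t ω)
    (hRbd : ∀ t ω, Rd t ω ≤ R t ω ∧ R t ω ≤ Rc t ω)
    (hmart : Martingale
      (fun t ω => S t ω / ∏ s ∈ Finset.range (t + 1), R s ω) ℱ P) :
    ¬ ∃ α β : ℕ → Ω → ℝ,
      β 0 = 0 ∧ β (T + 1) = 0 ∧
      (∀ t ≤ T, StronglyMeasurable[ℱ t] (α (t + 1)) ∧
        StronglyMeasurable[ℱ t] (β (t + 1))) ∧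
      -- self-financing: ϑ_t(ϱ_t(α_t) − α_{t+1}, β_t − β_{t+1}) ≥ 0
      (∀ t ≤ T, ∀ ω,
        0 ≤ (max (α t ω) 0 * Rd t ω - max (-(α t ω)) 0 * Rc t ω - α (t + 1) ω)
          + max (β t ω - β (t + 1) ω) 0 * Sb t ω
          - max (-(β t ω - β (t + 1) ω)) 0 * Sa t ω) ∧
      -- liquidation convention: α_{T+1} = ϑ_T(ϱ_T(α_T), β_T)
      (∀ ω, α (T + 1) ω =
        (max (α T ω) 0 * Rd T ω - max (-(α T ω)) 0 * Rc T ω)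
          + max (β T ω) 0 * Sb T ω - max (-(β T ω)) 0 * Sa T ω) ∧
      (∀ ω, α 0 ω ≤ 0) ∧
      (∀ ω, 0 ≤ α (T + 1) ω + max (β (T + 1) ω) 0 * Sb T ω
        - max (-(β (T + 1) ω)) 0 * Sa T ω) ∧
      0 < Q {ω | 0 < α (T + 1) ω + max (β (T + 1) ω) 0 * Sb T ω
        - max (-(β (T + 1) ω)) 0 * Sa T ω} :=
  emt_implies_no_arbitrage_general ℱ T Q P hQP Sb Sa S Rd Rc R hRd hSbd hRbd hmart
end

section
/- If the model admits no arbitrage, then there exists a strictly positive F_T-measurable random vector Z_T = (Z^B_T, Z^S_T) such that E_Q[Z_T · (α_{T+1}, β_{T+1})] − α_0 ≤ 0 for every self-financing strategy (α,β). (Existence of a consistent discount factor via separation of the cone of attainable outcomes from the positive orthant.) -/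
/-!
Encode a strategy by `(α₀, (α_{t+1})_{t ≤ T}, (β_{t+1})_{t ≤ T})`. The budget constraint at
`(t, ω)` is concave and piecewise linear in the positions, so it is equivalent to four linear
inequalities, one for each choice of borrowing/lending rate and bid/ask price: the self-financing
strategies form a polyhedral cone in a finite-dimensional space. No arbitrage says that no strategy
in this cone has a nonnegative, nonzero outcome `(α_{T+1}, β_{T+1}, -α₀)`; the case `α₀ < 0` is
reduced to `α₀ = 0` by putting `-α₀` into the bond and rolling it over at a deterministic rate
below `R^d`. Stiemke's lemma, the strictly positive form of Farkas' lemma, then yields strictly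
positive weights on these outcomes whose pairing with every strategy is nonpositive. Dividing by
the weight of `-α₀` and by `Q {ω}` gives the discount factor `Z_T`.
-/

open MeasureTheory Finset

section Farkas

variable {ι F : Type*}

theorem PointedCone.mem_hull_range_iff [AddCommGroup F] [Module ℝ F] [Fintype ι] {w : ι → F}
    {x : F} :
    x ∈ PointedCone.hull ℝ (Set.range w) ↔ ∃ lam : ι → ℝ, 0 ≤ lam ∧ ∑ i, lam i • w i = x := by
  rw [Submodule.mem_span_range_iff_exists_fun]
  constructor
  · rintro ⟨c, rfl⟩
    exact ⟨fun i => c i, fun i => (c i).2, rfl⟩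
  · rintro ⟨lam, hlam, rfl⟩
    exact ⟨fun i => ⟨lam i, hlam i⟩, rfl⟩

theorem PointedCone.sum_smul_mem_hull_image [AddCommGroup F] [Module ℝ F] {w : ι → F}
    {s : Finset ι} {lam : ι → ℝ} (hlam : ∀ i ∈ s, 0 ≤ lam i) :
    ∑ i ∈ s, lam i • w i ∈ PointedCone.hull ℝ (w '' s) :=
  Submodule.sum_mem _ fun i hi =>
    PointedCone.smul_mem _ (hlam i hi) (PointedCone.subset_hull ⟨i, hi, rfl⟩)

theorem Finset.exists_nonneg_sub_mul_eq_zero {s : Finset ι} {lam c : ι → ℝ}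
    (hlam : ∀ i ∈ s, 0 ≤ lam i) (hc : ∃ j ∈ s, 0 < c j) :
    ∃ k ∈ s, ∃ r : ℝ, (∀ i ∈ s, 0 ≤ lam i - r * c i) ∧ lam k - r * c k = 0 := by
  classical
  obtain ⟨k, hk, hmin⟩ := (s.filter (0 < c ·)).exists_min_image (fun i => lam i / c i)
    (by simpa [Finset.Nonempty] using hc)
  rw [Finset.mem_filter] at hk
  refine ⟨k, hk.1, lam k / c k, fun i hi => ?_, by rw [div_mul_cancel₀ _ hk.2.ne', sub_self]⟩
  have hr : 0 ≤ lam k / c k := div_nonneg (hlam k hk.1) hk.2.le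
  rcases lt_or_ge 0 (c i) with hci | hci
  · have := (le_div_iff₀ hci).mp (hmin i (Finset.mem_filter.mpr ⟨hi, hci⟩))
    linarith
  · nlinarith [hlam i hi]

theorem exists_erase_sum_smul_eq_of_not_linearIndepOn [AddCommGroup F] [Module ℝ F]
    [DecidableEq ι] {w : ι → F} {s : Finset ι} (hs : ¬LinearIndepOn ℝ w s) {lam : ι → ℝ}
    (hlam : ∀ i ∈ s, 0 ≤ lam i) :
    ∃ k ∈ s, ∃ lam' : ι → ℝ, (∀ i ∈ s.erase k, 0 ≤ lam' i) ∧
      ∑ i ∈ s.erase k, lam' i • w i = ∑ i ∈ s, lam i • w i := by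
  obtain ⟨c, hc, hcpos⟩ : ∃ c : ι → ℝ, ∑ i ∈ s, c i • w i = 0 ∧ ∃ j ∈ s, 0 < c j := by
    obtain ⟨f, hf, j, hj, hfj⟩ := not_linearIndepOn_finset_iff.mp hs
    rcases hfj.lt_or_gt with hneg | hpos
    · exact ⟨-f, by simp [neg_smul, hf], j, hj, by simpa using hneg⟩
    · exact ⟨f, hf, j, hj, hpos⟩
  obtain ⟨k, hk, r, hnonneg, hzero⟩ := Finset.exists_nonneg_sub_mul_eq_zero hlam hcpos
  refine ⟨k, hk, fun i => lam i - r * c i, fun i hi => hnonneg i (Finset.mem_of_mem_erase hi), ?_⟩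
  rw [Finset.sum_erase _ (by simp [hzero])]
  simp only [sub_smul, mul_smul, Finset.sum_sub_distrib, ← Finset.smul_sum, hc, smul_zero,
    sub_zero]

/-- Carathéodory's theorem for cones. -/
theorem exists_linearIndepOn_sum_smul_eq [AddCommGroup F] [Module ℝ F] [DecidableEq ι]
    (w : ι → F) (s : Finset ι) {lam : ι → ℝ} (hlam : ∀ i ∈ s, 0 ≤ lam i) :
    ∃ t ⊆ s, LinearIndepOn ℝ w t ∧ ∃ μ : ι → ℝ, (∀ i ∈ t, 0 ≤ μ i) ∧
      ∑ i ∈ t, μ i • w i = ∑ i ∈ s, lam i • w i := by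
  induction s using Finset.strongInduction generalizing lam with
  | H s ih =>
    by_cases hs : LinearIndepOn ℝ w s
    · exact ⟨s, subset_rfl, hs, lam, hlam, rfl⟩
    obtain ⟨k, hk, lam', hlam', hsum⟩ := exists_erase_sum_smul_eq_of_not_linearIndepOn hs hlam
    obtain ⟨t, hts, ht, μ, hμ, hμsum⟩ := ih _ (Finset.erase_ssubset hk) hlam'
    exact ⟨t, hts.trans (Finset.erase_subset _ _), ht, μ, hμ, hμsum.trans hsum⟩

theorem PointedCone.isClosed_hull_range_of_linearIndependent [NormedAddCommGroup F]
    [NormedSpace ℝ F] [Fintype ι] {w : ι → F} (hw : LinearIndependent ℝ w) :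
    IsClosed (PointedCone.hull ℝ (Set.range w) : Set F) := by
  have hhull : (PointedCone.hull ℝ (Set.range w) : Set F) =
      Fintype.linearCombination ℝ w '' Set.Ici 0 := by
    ext x
    simp [PointedCone.mem_hull_range_iff, Fintype.linearCombination_apply]
  rw [hhull]
  refine (LinearMap.isClosedEmbedding_of_injective ?_).isClosedMap _ isClosed_Ici
  exact LinearMap.ker_eq_bot.mpr hw.fintypeLinearCombination_injective

theorem PointedCone.isClosed_hull_range [NormedAddCommGroup F] [NormedSpace ℝ F] [Fintype ι]
    (w : ι → F) : IsClosed (PointedCone.hull ℝ (Set.range w) : Set F) := by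
  classical
  have hhull : (PointedCone.hull ℝ (Set.range w) : Set F) =
      ⋃ t : {t : Finset ι // LinearIndepOn ℝ w t}, PointedCone.hull ℝ (w '' t) := by
    refine subset_antisymm (fun x hx => ?_) (Set.iUnion_subset fun t =>
      Submodule.span_mono (Set.image_subset_range _ _))
    obtain ⟨lam, hlam, rfl⟩ := PointedCone.mem_hull_range_iff.mp hx
    obtain ⟨t, -, ht, μ, hμ, hsum⟩ :=
      exists_linearIndepOn_sum_smul_eq w Finset.univ fun i _ => hlam i
    exact Set.mem_iUnion.mpr ⟨⟨t, ht⟩, hsum ▸ PointedCone.sum_smul_mem_hull_image hμ⟩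
  rw [hhull]
  exact isClosed_iUnion_of_finite fun t => by
    rw [Set.image_eq_range]
    exact PointedCone.isClosed_hull_range_of_linearIndependent t.2

variable {E : Type*} [NormedAddCommGroup E] [NormedSpace ℝ E] [FiniteDimensional ℝ E]

/-- Farkas' lemma. -/
theorem exists_nonneg_sum_smul_eq_of_forall_nonpos [Fintype ι] (g : ι → Module.Dual ℝ E)
    (h : Module.Dual ℝ E) (H : ∀ v, (∀ i, g i v ≤ 0) → h v ≤ 0) :
    ∃ lam : ι → ℝ, 0 ≤ lam ∧ ∑ i, lam i • g i = h := by
  let e : Module.Dual ℝ E ≃ₗ[ℝ] StrongDual ℝ E := LinearMap.toContinuousLinearMap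
  let C : ProperCone ℝ (StrongDual ℝ E) :=
    ⟨PointedCone.hull ℝ (Set.range (e ∘ g)), PointedCone.isClosed_hull_range _⟩
  by_cases hC : e h ∈ C
  · obtain ⟨lam, hlam, hsum⟩ := PointedCone.mem_hull_range_iff.mp hC
    exact ⟨lam, hlam, e.injective (by simpa using hsum)⟩
  obtain ⟨f, hfC, hfh⟩ := C.hyperplane_separation_point hC
  -- in finite dimension `f` is evaluation at a point `v`, and `-v` violates `H`
  let v := (Module.evalEquiv ℝ E).symm (f.toLinearMap ∘ₗ e.toLinearMap)
  have hv (φ : Module.Dual ℝ E) : φ v = f (e φ) := Module.apply_evalEquiv_symm_apply ℝ E _ _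
  have := H (-v) fun i => by
    simpa [hv] using hfC _ (PointedCone.subset_hull ⟨i, rfl⟩)
  simp only [map_neg, hv, neg_nonpos] at this
  linarith

/-- Stiemke's lemma. -/
theorem exists_pos_sum_mul_nonpos_of_forall_nonneg [Fintype ι] {κ : Type*} [Fintype κ]
    (g : ι → Module.Dual ℝ E) (p : κ → Module.Dual ℝ E)
    (H : ∀ v, (∀ i, g i v ≤ 0) → (∀ k, 0 ≤ p k v) → ∀ k, p k v = 0) :
    ∃ z : κ → ℝ, (∀ k, 0 < z k) ∧ ∀ v, (∀ i, g i v ≤ 0) → ∑ k, z k * p k v ≤ 0 := by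
  have hfarkas (k₀ : κ) := exists_nonneg_sum_smul_eq_of_forall_nonpos
    (Sum.elim g fun k => -p k) (p k₀) fun v hv =>
      (H v (fun i => hv (.inl i)) (fun k => by simpa using hv (.inr k)) k₀).le
  choose lam hlam hsum using hfarkas
  refine ⟨fun k => 1 + ∑ k₀, lam k₀ (.inr k), fun k =>
    add_pos_of_pos_of_nonneg one_pos (Finset.sum_nonneg fun k₀ _ => hlam k₀ _), fun v hv => ?_⟩
  have hcert (k₀ : κ) : p k₀ v + ∑ k, lam k₀ (.inr k) * p k v =
      ∑ i, lam k₀ (.inl i) * g i v := by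
    have := congrArg (· v) (hsum k₀)
    simp only [Fintype.sum_sum_type, Sum.elim_inl, Sum.elim_inr, smul_neg, sum_neg_distrib,
      LinearMap.add_apply, LinearMap.coe_sum, LinearMap.coe_smul, Finset.sum_apply,
      Pi.smul_apply, smul_eq_mul, LinearMap.neg_apply] at this
    linarith
  calc ∑ k, (1 + ∑ k₀, lam k₀ (.inr k)) * p k v
      = ∑ k₀, (p k₀ v + ∑ k, lam k₀ (.inr k) * p k v) := by
        simp only [add_mul, one_mul, Finset.sum_add_distrib, Finset.sum_mul]
        rw [Finset.sum_comm]
    _ = ∑ k₀, ∑ i, lam k₀ (.inl i) * g i v := Finset.sum_congr rfl fun k₀ _ => hcert k₀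
    _ ≤ 0 := Finset.sum_nonpos fun k₀ _ => Finset.sum_nonpos fun i _ =>
        mul_nonpos_of_nonneg_of_nonpos (hlam k₀ _) (hv i)

end Farkas

theorem MeasureTheory.integral_div_measureReal_singleton {Ω : Type*} {m0 : MeasurableSpace Ω}
    {Q : Measure Ω} [Fintype Ω] [MeasurableSingletonClass Ω] [IsFiniteMeasure Q]
    (hQ : ∀ ω, 0 < Q {ω}) (f : Ω → ℝ) :
    ∫ ω, f ω / Q.real {ω} ∂Q = ∑ ω, f ω := by
  rw [integral_fintype .of_finite]
  refine Finset.sum_congr rfl fun ω _ => ?_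
  have : 0 < Q.real {ω} := ENNReal.toReal_pos (hQ ω).ne' (measure_ne_top Q _)
  rw [smul_eq_mul]
  field_simp

theorem max_mul_sub_max_neg_mul {p q : ℝ} (hpq : p ≤ q) (u : ℝ) :
    max u 0 * p - max (-u) 0 * q = min (p * u) (q * u) := by
  rcases le_total 0 u with h | h
  · rw [max_eq_left h, max_eq_right (by linarith), min_eq_left (by nlinarith)]; ring
  · rw [max_eq_right h, max_eq_left (by linarith), min_eq_right (by nlinarith)]; ring

namespace BidAsk

theorem selfFinancing_step_iff {rd rc sb sa x z d : ℝ} (hr : rd ≤ rc) (hs : sb ≤ sa) :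
    0 ≤ (max x 0 * rd - max (-x) 0 * rc - z) + max d 0 * sb - max (-d) 0 * sa ↔
      ∀ b₁ b₂ : Bool, z - (bif b₁ then rd else rc) * x - (bif b₂ then sb else sa) * d ≤ 0 := by
  have hx := max_mul_sub_max_neg_mul hr x
  have hd := max_mul_sub_max_neg_mul hs d
  simp only [Bool.forall_bool, cond_false, cond_true]
  constructor
  · intro h
    refine ⟨⟨?_, ?_⟩, ?_, ?_⟩ <;>
      linarith [min_le_left (rd * x) (rc * x), min_le_right (rd * x) (rc * x),
        min_le_left (sb * d) (sa * d), min_le_right (sb * d) (sa * d)]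
  · rintro ⟨⟨h₁, h₂⟩, h₃, h₄⟩
    rcases min_cases (rd * x) (rc * x) with ⟨hx', -⟩ | ⟨hx', -⟩ <;>
      rcases min_cases (sb * d) (sa * d) with ⟨hd', -⟩ | ⟨hd', -⟩ <;> linarith

variable {Ω : Type*} {T : ℕ}

def liquidationValue (sb sa ξ ζ : ℝ) : ℝ := ξ + max ζ 0 * sb - max (-ζ) 0 * sa

theorem liquidationValue_of_nonneg {sb sa ξ ζ : ℝ} (hζ : 0 ≤ ζ) :
    liquidationValue sb sa ξ ζ = ξ + ζ * sb := by
  simp [liquidationValue, hζ]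

def IsSelfFinancing (Rd Rc Sb Sa : ℕ → Ω → ℝ) (T : ℕ) (α β : ℕ → Ω → ℝ) : Prop :=
  ∀ t ≤ T, ∀ ω,
    0 ≤ (max (α t ω) 0 * Rd t ω - max (-(α t ω)) 0 * Rc t ω - α (t + 1) ω)
      + max (β t ω - β (t + 1) ω) 0 * Sb t ω
      - max (-(β t ω - β (t + 1) ω)) 0 * Sa t ω

theorem IsSelfFinancing.congr {Rd Rc Sb Sa : ℕ → Ω → ℝ} {α β α' β' : ℕ → Ω → ℝ}
    (h : IsSelfFinancing Rd Rc Sb Sa T α β) (hα : ∀ n ≤ T + 1, α n = α' n)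
    (hβ : ∀ n ≤ T + 1, β n = β' n) : IsSelfFinancing Rd Rc Sb Sa T α' β' := by
  intro t ht ω
  rw [← hα t (by omega), ← hα (t + 1) (by omega), ← hβ t (by omega), ← hβ (t + 1) (by omega)]
  exact h t ht ω

def NoArbitrage {m0 : MeasurableSpace Ω} (ℱ : Filtration ℕ m0) (Q : Measure Ω)
    (Rd Rc Sb Sa : ℕ → Ω → ℝ) (T : ℕ) : Prop :=
  ¬ ∃ α β : ℕ → Ω → ℝ,
    β 0 = 0 ∧ StronglyMeasurable[ℱ 0] (α 0) ∧
    (∀ t ≤ T, StronglyMeasurable[ℱ t] (α (t + 1)) ∧ StronglyMeasurable[ℱ t] (β (t + 1))) ∧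
    IsSelfFinancing Rd Rc Sb Sa T α β ∧
    (∀ ω, α 0 ω ≤ 0) ∧
    (∀ ω, 0 ≤ liquidationValue (Sb T ω) (Sa T ω) (α (T + 1) ω) (β (T + 1) ω)) ∧
    0 < Q {ω | 0 < liquidationValue (Sb T ω) (Sa T ω) (α (T + 1) ω) (β (T + 1) ω)}

/-- A strategy with `β₀ = 0` and deterministic `α₀`, up to time `T + 1`, is encoded as
`(α₀, (α_{t+1})_{t ≤ T}, (β_{t+1})_{t ≤ T})`. -/
abbrev StrategyData (Ω : Type*) (T : ℕ) :=
  ℝ × (Fin (T + 1) → Ω → ℝ) × (Fin (T + 1) → Ω → ℝ)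

/-- `bondAt n ω v = α_n(ω)` and `stockAt n ω v = β_n(ω)`, both `0` for `n > T + 1`. -/
def bondAt : ℕ → Ω → Module.Dual ℝ (StrategyData Ω T)
  | 0, _ => LinearMap.fst ℝ ℝ _
  | t + 1, ω =>
    if h : t < T + 1 then
      LinearMap.proj ω ∘ₗ LinearMap.proj (⟨t, h⟩ : Fin (T + 1)) ∘ₗ
        LinearMap.fst ℝ _ _ ∘ₗ LinearMap.snd ℝ ℝ _
    else 0

def stockAt : ℕ → Ω → Module.Dual ℝ (StrategyData Ω T)
  | 0, _ => 0
  | t + 1, ω =>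
    if h : t < T + 1 then
      LinearMap.proj ω ∘ₗ LinearMap.proj (⟨t, h⟩ : Fin (T + 1)) ∘ₗ
        LinearMap.snd ℝ _ _ ∘ₗ LinearMap.snd ℝ ℝ _
    else 0

@[simp] theorem bondAt_zero (ω : Ω) (v : StrategyData Ω T) : bondAt 0 ω v = v.1 := rfl

@[simp] theorem stockAt_zero (ω : Ω) (v : StrategyData Ω T) : stockAt 0 ω v = 0 := rfl

@[simp] theorem bondAt_succ (t : Fin (T + 1)) (ω : Ω) (v : StrategyData Ω T) :
    bondAt (t + 1) ω v = v.2.1 t ω := by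
  simp [bondAt, t.is_le]

@[simp] theorem stockAt_succ (t : Fin (T + 1)) (ω : Ω) (v : StrategyData Ω T) :
    stockAt (t + 1) ω v = v.2.2 t ω := by
  simp [stockAt, t.is_le]

def selfFinancingConstraint (Rd Rc Sb Sa : ℕ → Ω → ℝ) :
    Fin (T + 1) × Ω × Bool × Bool → Module.Dual ℝ (StrategyData Ω T)
  | (t, ω, b₁, b₂) =>
    bondAt (t + 1) ω - (bif b₁ then Rd t ω else Rc t ω) • bondAt t ω
      - (bif b₂ then Sb t ω else Sa t ω) • (stockAt t ω - stockAt (t + 1) ω)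

theorem isSelfFinancing_iff {Rd Rc Sb Sa : ℕ → Ω → ℝ} (hdc : ∀ t ω, Rd t ω ≤ Rc t ω)
    (hba : ∀ t ω, Sb t ω ≤ Sa t ω) {v : StrategyData Ω T} :
    IsSelfFinancing Rd Rc Sb Sa T (fun n ω => bondAt n ω v) (fun n ω => stockAt n ω v) ↔
      ∀ q, selfFinancingConstraint Rd Rc Sb Sa q v ≤ 0 := by
  constructor
  · rintro h ⟨t, ω, b₁, b₂⟩
    exact (selfFinancing_step_iff (hdc t ω) (hba t ω)).mp (h t (by omega) ω) b₁ b₂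
  · intro h t ht ω
    exact (selfFinancing_step_iff (hdc t ω) (hba t ω)).mpr fun b₁ b₂ =>
      h (⟨t, by omega⟩, ω, b₁, b₂)

variable {m0 : MeasurableSpace Ω}

def adapted (ℱ : Filtration ℕ m0) (T : ℕ) : Submodule ℝ (StrategyData Ω T) where
  carrier := {v | ∀ t : Fin (T + 1),
    StronglyMeasurable[ℱ t] (v.2.1 t) ∧ StronglyMeasurable[ℱ t] (v.2.2 t)}
  add_mem' hu hv t := ⟨(hu t).1.add (hv t).1, (hu t).2.add (hv t).2⟩
  zero_mem' _ := ⟨stronglyMeasurable_const, stronglyMeasurable_const⟩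
  smul_mem' c _ hv t := ⟨(hv t).1.const_smul c, (hv t).2.const_smul c⟩

def bondRollover (m : ℝ) : StrategyData Ω T := (1, fun t _ => m ^ ((t : ℕ) + 1), 0)

theorem bondRollover_mem_adapted (ℱ : Filtration ℕ m0) (m : ℝ) :
    (bondRollover m : StrategyData Ω T) ∈ adapted ℱ T :=
  fun _ => ⟨stronglyMeasurable_const, stronglyMeasurable_const⟩

theorem bondAt_bondRollover {n : ℕ} (hn : n ≤ T + 1) (ω : Ω) (m : ℝ) :
    bondAt n ω (bondRollover m : StrategyData Ω T) = m ^ n := by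
  rcases n with _ | s
  · rfl
  · exact bondAt_succ ⟨s, by omega⟩ ω _

theorem stockAt_bondRollover (n : ℕ) (ω : Ω) (m : ℝ) :
    stockAt n ω (bondRollover m : StrategyData Ω T) = 0 := by
  rcases n with _ | s
  · rfl
  · simp only [stockAt]; split_ifs <;> rfl

theorem selfFinancingConstraint_bondRollover_nonpos {Rd Rc Sb Sa : ℕ → Ω → ℝ}
    (hdc : ∀ t ω, Rd t ω ≤ Rc t ω) {m : ℝ} (hm0 : 0 ≤ m) (hm : ∀ t ≤ T, ∀ ω, m ≤ Rd t ω)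
    (q : Fin (T + 1) × Ω × Bool × Bool) :
    selfFinancingConstraint Rd Rc Sb Sa q (bondRollover m) ≤ 0 := by
  obtain ⟨t, ω, b₁, b₂⟩ := q
  have hR : m ≤ bif b₁ then Rd t ω else Rc t ω := by
    cases b₁
    · exact (hm t t.is_le ω).trans (hdc t ω)
    · exact hm t t.is_le ω
  simp only [selfFinancingConstraint, LinearMap.sub_apply, LinearMap.smul_apply, smul_eq_mul,
    stockAt_bondRollover, bondAt_bondRollover (Nat.le_succ_of_le t.is_le),
    bondAt_bondRollover (Nat.succ_le_succ t.is_le), sub_self, mul_zero, sub_zero, pow_succ]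
  linarith [mul_le_mul_of_nonneg_left hR (pow_nonneg hm0 t)]

variable {ℱ : Filtration ℕ m0} {Q : Measure Ω} {Rd Rc Sb Sa : ℕ → Ω → ℝ}

theorem NoArbitrage.liquidationValue_nonpos (hNA : NoArbitrage ℱ Q Rd Rc Sb Sa T)
    (hQ : ∀ ω, 0 < Q {ω}) (hdc : ∀ t ω, Rd t ω ≤ Rc t ω) (hba : ∀ t ω, Sb t ω ≤ Sa t ω)
    {v : StrategyData Ω T} (hv : v ∈ adapted ℱ T)
    (hsf : ∀ q, selfFinancingConstraint Rd Rc Sb Sa q v ≤ 0) (h₀ : v.1 ≤ 0)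
    (hliq : ∀ ω,
      0 ≤ liquidationValue (Sb T ω) (Sa T ω) (bondAt (T + 1) ω v) (stockAt (T + 1) ω v))
    (ω : Ω) :
    liquidationValue (Sb T ω) (Sa T ω) (bondAt (T + 1) ω v) (stockAt (T + 1) ω v) ≤ 0 := by
  by_contra! hpos
  refine hNA ⟨fun n ω => bondAt n ω v, fun n ω => stockAt n ω v, rfl, stronglyMeasurable_const,
    fun t ht => ?_, (isSelfFinancing_iff hdc hba).mpr hsf, fun _ => h₀, hliq,
    (hQ ω).trans_le (measure_mono (Set.singleton_subset_iff.mpr hpos))⟩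
  have hbond : (fun ω => bondAt (t + 1) ω v) = v.2.1 ⟨t, by omega⟩ :=
    funext fun ω => bondAt_succ ⟨t, by omega⟩ ω v
  have hstock : (fun ω => stockAt (t + 1) ω v) = v.2.2 ⟨t, by omega⟩ :=
    funext fun ω => stockAt_succ ⟨t, by omega⟩ ω v
  beta_reduce
  rw [hbond, hstock]
  exact hv ⟨t, by omega⟩

theorem NoArbitrage.eq_zero_of_nonneg [Finite Ω] [Nonempty Ω]
    (hNA : NoArbitrage ℱ Q Rd Rc Sb Sa T) (hQ : ∀ ω, 0 < Q {ω}) (hSb : ∀ t ω, 0 < Sb t ω)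
    (hRd : ∀ t ω, 0 < Rd t ω) (hdc : ∀ t ω, Rd t ω ≤ Rc t ω) (hba : ∀ t ω, Sb t ω ≤ Sa t ω)
    {v : StrategyData Ω T} (hv : v ∈ adapted ℱ T)
    (hsf : ∀ q, selfFinancingConstraint Rd Rc Sb Sa q v ≤ 0) (h₀ : v.1 ≤ 0)
    (hα : ∀ ω, 0 ≤ bondAt (T + 1) ω v) (hβ : ∀ ω, 0 ≤ stockAt (T + 1) ω v) :
    v.1 = 0 ∧ (∀ ω, bondAt (T + 1) ω v = 0) ∧ ∀ ω, stockAt (T + 1) ω v = 0 := by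
  -- `Rd` carries no measurability assumption, so roll over at a deterministic rate `m ≤ Rd`
  obtain ⟨m, hm0, hm⟩ : ∃ m > 0, ∀ t ≤ T, ∀ ω, m ≤ Rd t ω := by
    obtain ⟨q, hq⟩ := Finite.exists_min fun q : Fin (T + 1) × Ω => Rd q.1 q.2
    exact ⟨_, hRd _ _, fun t ht ω => hq (⟨t, by omega⟩, ω)⟩
  set v' := v + (-v.1) • bondRollover m
  have hv' : v' ∈ adapted ℱ T :=
    add_mem hv (Submodule.smul_mem _ _ (bondRollover_mem_adapted ℱ m))
  have hsf' (q : Fin (T + 1) × Ω × Bool × Bool) :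
      selfFinancingConstraint Rd Rc Sb Sa q v' ≤ 0 := by
    simp only [v', map_add, map_smul, smul_eq_mul]
    nlinarith [hsf q, selfFinancingConstraint_bondRollover_nonpos (Sb := Sb) (Sa := Sa)
      hdc hm0.le hm q]
  have hSβ (ω : Ω) : 0 ≤ stockAt (T + 1) ω v * Sb T ω := mul_nonneg (hβ ω) (hSb T ω).le
  have hterm : 0 ≤ -v.1 * m ^ (T + 1) := mul_nonneg (neg_nonneg.mpr h₀) (pow_nonneg hm0.le _)
  have hliq (ω : Ω) : liquidationValue (Sb T ω) (Sa T ω) (bondAt (T + 1) ω v')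
      (stockAt (T + 1) ω v') =
        bondAt (T + 1) ω v + -v.1 * m ^ (T + 1) + stockAt (T + 1) ω v * Sb T ω := by
    simp only [v', map_add, map_smul, smul_eq_mul, bondAt_bondRollover le_rfl,
      stockAt_bondRollover, mul_zero, add_zero, liquidationValue_of_nonneg (hβ ω)]
  have key (ω : Ω) :
      bondAt (T + 1) ω v + -v.1 * m ^ (T + 1) + stockAt (T + 1) ω v * Sb T ω ≤ 0 := by
    rw [← hliq]
    refine hNA.liquidationValue_nonpos hQ hdc hba hv' hsf' (by simp [v', bondRollover])
      (fun ω => ?_) ω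
    rw [hliq]
    linarith [hα ω, hSβ ω]
  obtain ⟨ω₀⟩ := ‹Nonempty Ω›
  refine ⟨?_, fun ω => le_antisymm (by linarith [key ω, hSβ ω]) (hα ω), fun ω => ?_⟩
  · nlinarith [key ω₀, hα ω₀, hSβ ω₀, pow_pos hm0 (T + 1)]
  · nlinarith [key ω, hα ω, hβ ω, hSb T ω]

theorem NoArbitrage.exists_pos_weights_strategyData [Fintype Ω] [Nonempty Ω]
    (hNA : NoArbitrage ℱ Q Rd Rc Sb Sa T) (hQ : ∀ ω, 0 < Q {ω}) (hSb : ∀ t ω, 0 < Sb t ω)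
    (hRd : ∀ t ω, 0 < Rd t ω) (hdc : ∀ t ω, Rd t ω ≤ Rc t ω) (hba : ∀ t ω, Sb t ω ≤ Sa t ω) :
    ∃ zB zS : Ω → ℝ, (∀ ω, 0 < zB ω ∧ 0 < zS ω) ∧
      ∀ v ∈ adapted ℱ T, (∀ q, selfFinancingConstraint Rd Rc Sb Sa q v ≤ 0) →
        ∑ ω, (zB ω * bondAt (T + 1) ω v + zS ω * stockAt (T + 1) ω v) ≤ v.1 := by
  let U := adapted ℱ T
  let outcome : Ω ⊕ Ω ⊕ Unit → Module.Dual ℝ (StrategyData Ω T) :=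
    Sum.elim (fun ω => bondAt (T + 1) ω) (Sum.elim (fun ω => stockAt (T + 1) ω)
      fun _ => -LinearMap.fst ℝ ℝ _)
  obtain ⟨z, hz, hzΦ⟩ := exists_pos_sum_mul_nonpos_of_forall_nonneg
    (fun q => selfFinancingConstraint Rd Rc Sb Sa q ∘ₗ U.subtype)
    (fun k => outcome k ∘ₗ U.subtype) fun ⟨v, hv⟩ hsf hnonneg => by
      obtain ⟨h₀, hα, hβ⟩ := hNA.eq_zero_of_nonneg hQ hSb hRd hdc hba hv hsf
        (by simpa [outcome] using hnonneg (.inr (.inr ())))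
        (fun ω => hnonneg (.inl ω)) (fun ω => hnonneg (.inr (.inl ω)))
      simp [outcome, h₀, hα, hβ]
  refine ⟨fun ω => z (.inl ω) / z (.inr (.inr ())),
    fun ω => z (.inr (.inl ω)) / z (.inr (.inr ())),
    fun ω => ⟨div_pos (hz _) (hz _), div_pos (hz _) (hz _)⟩, fun v hv hsf => ?_⟩
  have hΦ := hzΦ ⟨v, hv⟩ hsf
  simp only [outcome, Fintype.sum_sum_type, LinearMap.comp_apply, Submodule.subtype_apply,
    Sum.elim_inl, Sum.elim_inr, Fintype.sum_unique, LinearMap.neg_apply, LinearMap.fst_apply,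
    mul_neg] at hΦ
  calc ∑ ω, (z (.inl ω) / z (.inr (.inr ())) * bondAt (T + 1) ω v
        + z (.inr (.inl ω)) / z (.inr (.inr ())) * stockAt (T + 1) ω v)
      = (∑ ω, z (.inl ω) * bondAt (T + 1) ω v + ∑ ω, z (.inr (.inl ω)) * stockAt (T + 1) ω v)
        / z (.inr (.inr ())) := by
        rw [← Finset.sum_add_distrib, Finset.sum_div]
        exact Finset.sum_congr rfl fun ω _ => by ring
    _ ≤ v.1 := by
      rw [div_le_iff₀ (hz _)]
      linarith

theorem exists_strategyData_of_isSelfFinancing (hℱ0 : (ℱ 0 : MeasurableSpace Ω) = ⊥)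
    (hdc : ∀ t ω, Rd t ω ≤ Rc t ω) (hba : ∀ t ω, Sb t ω ≤ Sa t ω) {α β : ℕ → Ω → ℝ}
    (hβ0 : β 0 = 0) (hα0 : StronglyMeasurable[ℱ 0] (α 0))
    (hαβ : ∀ t ≤ T, StronglyMeasurable[ℱ t] (α (t + 1)) ∧ StronglyMeasurable[ℱ t] (β (t + 1)))
    (hsf : IsSelfFinancing Rd Rc Sb Sa T α β) :
    ∃ v ∈ adapted ℱ T, (∀ q, selfFinancingConstraint Rd Rc Sb Sa q v ≤ 0) ∧
      (∀ ω, v.1 = α 0 ω) ∧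
      ∀ ω, bondAt (T + 1) ω v = α (T + 1) ω ∧ stockAt (T + 1) ω v = β (T + 1) ω := by
  obtain ⟨c, hc⟩ := stronglyMeasurable_bot_iff.mp (hℱ0 ▸ hα0)
  let v : StrategyData Ω T := (c, fun t => α (t + 1), fun t => β (t + 1))
  have hbond (n : ℕ) (hn : n ≤ T + 1) : (fun ω => bondAt n ω v) = α n := by
    rcases n with _ | s
    · exact hc.symm
    · exact funext fun ω => bondAt_succ ⟨s, by omega⟩ ω v
  have hstock (n : ℕ) (hn : n ≤ T + 1) : (fun ω => stockAt n ω v) = β n := by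
    rcases n with _ | s
    · exact hβ0.symm
    · exact funext fun ω => stockAt_succ ⟨s, by omega⟩ ω v
  refine ⟨v, fun t => hαβ t t.is_le, (isSelfFinancing_iff hdc hba).mp
    (hsf.congr (fun n hn => (hbond n hn).symm) (fun n hn => (hstock n hn).symm)),
    fun ω => by rw [hc], fun ω => ⟨congrFun (hbond _ le_rfl) ω, congrFun (hstock _ le_rfl) ω⟩⟩

theorem NoArbitrage.exists_pos_weights [Fintype Ω] [Nonempty Ω]
    (hℱ0 : (ℱ 0 : MeasurableSpace Ω) = ⊥) (hNA : NoArbitrage ℱ Q Rd Rc Sb Sa T)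
    (hQ : ∀ ω, 0 < Q {ω}) (hSb : ∀ t ω, 0 < Sb t ω) (hRd : ∀ t ω, 0 < Rd t ω)
    (hdc : ∀ t ω, Rd t ω ≤ Rc t ω) (hba : ∀ t ω, Sb t ω ≤ Sa t ω) :
    ∃ zB zS : Ω → ℝ, (∀ ω, 0 < zB ω ∧ 0 < zS ω) ∧
      ∀ α β : ℕ → Ω → ℝ, β 0 = 0 → StronglyMeasurable[ℱ 0] (α 0) →
        (∀ t ≤ T, StronglyMeasurable[ℱ t] (α (t + 1)) ∧ StronglyMeasurable[ℱ t] (β (t + 1))) →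
        IsSelfFinancing Rd Rc Sb Sa T α β →
        ∀ ω₀, ∑ ω, (zB ω * α (T + 1) ω + zS ω * β (T + 1) ω) ≤ α 0 ω₀ := by
  obtain ⟨zB, zS, hz, hzΦ⟩ := hNA.exists_pos_weights_strategyData hQ hSb hRd hdc hba
  refine ⟨zB, zS, hz, fun α β hβ0 hα0 hαβ hsf ω₀ => ?_⟩
  obtain ⟨v, hv, hvsf, hv₀, hvT⟩ := exists_strategyData_of_isSelfFinancing hℱ0 hdc hba hβ0 hα0 hαβ hsf
  rw [← hv₀ ω₀]
  simpa only [hvT] using hzΦ v hv hvsf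

end BidAsk

/-- If the model admits no arbitrage, then there exists a strictly positive
`F_T`-measurable consistent discount factor `Z_T = (Z^B_T, Z^S_T)` with
`E_Q[Z_T · (α_{T+1}, β_{T+1})] − α_0 ≤ 0` for every self-financing strategy. -/
theorem no_arbitrage_implies_discount_factor
    {Ω : Type*} [Fintype Ω] [Nonempty Ω] {m0 : MeasurableSpace Ω}
    [MeasurableSingletonClass Ω]
    (ℱ : Filtration ℕ m0) (T : ℕ) (hℱ0 : (ℱ 0 : MeasurableSpace Ω) = ⊥)
    (Q : Measure Ω) [IsProbabilityMeasure Q] (hQfull : ∀ ω, 0 < Q {ω})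
    (Sb Sa Rd Rc : ℕ → Ω → ℝ)
    (hSb : ∀ t ω, 0 < Sb t ω) (hba : ∀ t ω, Sb t ω ≤ Sa t ω)
    (hRd : ∀ t ω, 0 < Rd t ω) (hdc : ∀ t ω, Rd t ω ≤ Rc t ω)
    -- no arbitrage
    (hNA : ¬ ∃ α β : ℕ → Ω → ℝ,
      β 0 = 0 ∧ StronglyMeasurable[ℱ 0] (α 0) ∧
      (∀ t ≤ T, StronglyMeasurable[ℱ t] (α (t + 1)) ∧
        StronglyMeasurable[ℱ t] (β (t + 1))) ∧
      (∀ t ≤ T, ∀ ω,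
        0 ≤ (max (α t ω) 0 * Rd t ω - max (-(α t ω)) 0 * Rc t ω - α (t + 1) ω)
          + max (β t ω - β (t + 1) ω) 0 * Sb t ω
          - max (-(β t ω - β (t + 1) ω)) 0 * Sa t ω) ∧
      (∀ ω, α 0 ω ≤ 0) ∧
      (∀ ω, 0 ≤ α (T + 1) ω + max (β (T + 1) ω) 0 * Sb T ω
        - max (-(β (T + 1) ω)) 0 * Sa T ω) ∧
      0 < Q {ω | 0 < α (T + 1) ω + max (β (T + 1) ω) 0 * Sb T ω
        - max (-(β (T + 1) ω)) 0 * Sa T ω}) :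
    ∃ ZB ZS : Ω → ℝ, (∀ ω, 0 < ZB ω ∧ 0 < ZS ω) ∧
      ∀ α β : ℕ → Ω → ℝ,
        β 0 = 0 → StronglyMeasurable[ℱ 0] (α 0) →
        (∀ t ≤ T, StronglyMeasurable[ℱ t] (α (t + 1)) ∧
          StronglyMeasurable[ℱ t] (β (t + 1))) →
        (∀ t ≤ T, ∀ ω,
          0 ≤ (max (α t ω) 0 * Rd t ω - max (-(α t ω)) 0 * Rc t ω - α (t + 1) ω)
            + max (β t ω - β (t + 1) ω) 0 * Sb t ω
            - max (-(β t ω - β (t + 1) ω)) 0 * Sa t ω) →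
        ∀ ω₀, (∫ ω, (ZB ω * α (T + 1) ω + ZS ω * β (T + 1) ω) ∂Q) ≤ α 0 ω₀ := by
  obtain ⟨zB, zS, hz, hzΦ⟩ :=
    BidAsk.NoArbitrage.exists_pos_weights hℱ0 hNA hQfull hSb hRd hdc hba
  have hQ (ω : Ω) : 0 < Q.real {ω} := ENNReal.toReal_pos (hQfull ω).ne' (measure_ne_top Q _)
  refine ⟨fun ω => zB ω / Q.real {ω}, fun ω => zS ω / Q.real {ω},
    fun ω => ⟨div_pos (hz ω).1 (hQ ω), div_pos (hz ω).2 (hQ ω)⟩,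
    fun α β hβ0 hα0 hαβ hsf ω₀ => ?_⟩
  calc ∫ ω, (zB ω / Q.real {ω} * α (T + 1) ω + zS ω / Q.real {ω} * β (T + 1) ω) ∂Q
      = ∑ ω, (zB ω * α (T + 1) ω + zS ω * β (T + 1) ω) := by
        rw [← integral_div_measureReal_singleton hQfull]
        congr with ω
        ring
    _ ≤ α 0 ω₀ := hzΦ α β hβ0 hα0 hαβ hsf ω₀
end

section
/- Given a consistent pricing system Z = (Z^R, Z^S) with associated predictable rate process R and deflator B, define the measure P by P({ω}) = B_T(ω) Z^R_T(ω) Q({ω}) and the process S_t = Z^S_t / Z^R_t. Then P is a probability measure equivalent to Q, S^b ≤ S ≤ S^a, R^d ≤ R ≤ R^c, and S/B is a P-martingale; i.e. (P, S, R) is an equivalent martingale triple. -/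
/-!
The process `D_t = B_t Z^R_t` is a strictly positive `Q`-martingale with `D_0 = 1`, so
`P = D_T · Q` is a probability measure equivalent to `Q`, with density process `D`. By Bayes'
formula, a process `X` is a `P`-martingale as soon as `X D` is a `Q`-martingale, and
`(S / B) D = Z^S`.
-/

open MeasureTheory Finset

def MartingaleUpTo {Ω : Type*} {m0 : MeasurableSpace Ω} (μ : Measure Ω) (ℱ : Filtration ℕ m0)
    (T : ℕ) (M : ℕ → Ω → ℝ) : Prop :=
  ∀ t < T, μ[M (t + 1)|ℱ t] =ᵐ[μ] M t

def deflator {Ω : Type*} (R : ℕ → Ω → ℝ) (t : ℕ) (ω : Ω) : ℝ :=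
  ∏ s ∈ range (t + 1), R s ω

theorem deflator_pos {Ω : Type*} {R : ℕ → Ω → ℝ} {T : ℕ} (hR : ∀ t ≤ T, ∀ ω, 0 < R t ω)
    (t : ℕ) (ht : t ≤ T) (ω : Ω) : 0 < deflator R t ω :=
  prod_pos fun s hs => hR s (by have := mem_range.1 hs; omega) ω

theorem adapted_deflator {Ω : Type*} {m0 : MeasurableSpace Ω} {ℱ : Filtration ℕ m0}
    {R : ℕ → Ω → ℝ} (hR0 : StronglyMeasurable[ℱ 0] (R 0))
    (hR : ∀ t, StronglyMeasurable[ℱ t] (R (t + 1))) : Adapted ℱ (deflator R) := by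
  intro t
  refine measurable_fun_prod _ fun s hs => ?_
  have hst : s ≤ t := Nat.lt_succ_iff.1 (mem_range.1 hs)
  cases s with
  | zero => exact (hR0.mono (ℱ.mono hst)).measurable
  | succ s => exact ((hR s).mono (ℱ.mono (by omega))).measurable

theorem setIntegral_withDensity_ofReal {Ω : Type*} {m0 : MeasurableSpace Ω} {μ : Measure Ω}
    {D : Ω → ℝ} (hD : Measurable D) (hD0 : ∀ ω, 0 ≤ D ω) (g : Ω → ℝ) {A : Set Ω}
    (hA : MeasurableSet A) :
    ∫ ω in A, g ω ∂μ.withDensity (fun ω => ENNReal.ofReal (D ω)) = ∫ ω in A, g ω * D ω ∂μ := by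
  change ∫ ω in A, g ω ∂μ.withDensity (fun ω => ((D ω).toNNReal : ENNReal)) = _
  rw [setIntegral_withDensity_eq_setIntegral_smul hD.real_toNNReal g hA]
  refine setIntegral_congr_fun hA fun ω _ => ?_
  simp [NNReal.smul_def, Real.coe_toNNReal _ (hD0 ω), mul_comm]

section FiniteSpace

variable {Ω : Type*} [Finite Ω] {m0 : MeasurableSpace Ω} [MeasurableSingletonClass Ω]
  {μ : Measure Ω} [IsFiniteMeasure μ]

theorem setIntegral_eq_of_condExp_ae_eq {m : MeasurableSpace Ω} (hm : m ≤ m0) {f f' : Ω → ℝ}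
    (hf : μ[f|m] =ᵐ[μ] f') {A : Set Ω} (hA : MeasurableSet[m] A) :
    ∫ ω in A, f ω ∂μ = ∫ ω in A, f' ω ∂μ := by
  rw [← setIntegral_condExp hm Integrable.of_finite hA]
  exact setIntegral_congr_ae (hm A hA) (hf.mono fun ω h _ => h)

theorem setIntegral_mul_eq_of_condExp_ae_eq {m : MeasurableSpace Ω} (hm : m ≤ m0)
    {f f' g : Ω → ℝ} (hf : μ[f|m] =ᵐ[μ] f') (hg : StronglyMeasurable[m] g) {A : Set Ω}
    (hA : MeasurableSet[m] A) :
    ∫ ω in A, g ω * f ω ∂μ = ∫ ω in A, g ω * f' ω ∂μ :=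
  setIntegral_eq_of_condExp_ae_eq hm
    ((condExp_mul_of_stronglyMeasurable_left (μ := μ) hg .of_finite .of_finite).trans
      (hf.mono fun ω h => by simp only [Pi.mul_apply, h])) hA

variable {ℱ : Filtration ℕ m0} {T : ℕ}

theorem MartingaleUpTo.setIntegral_mul_eq {D : ℕ → Ω → ℝ} (hD : MartingaleUpTo μ ℱ T D)
    {t : ℕ} {g : Ω → ℝ} (hg : StronglyMeasurable[ℱ t] g) {A : Set Ω} (hA : MeasurableSet[ℱ t] A)
    {u : ℕ} (htu : t ≤ u) (huT : u ≤ T) :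
    ∫ ω in A, g ω * D u ω ∂μ = ∫ ω in A, g ω * D t ω ∂μ := by
  induction u, htu using Nat.le_induction with
  | base => rfl
  | succ u htu ih =>
    rw [setIntegral_mul_eq_of_condExp_ae_eq (ℱ.le u) (hD u huT) (hg.mono (ℱ.mono htu))
      (ℱ.mono htu A hA), ih (by omega)]

theorem MartingaleUpTo.isProbabilityMeasure_withDensity [IsProbabilityMeasure μ]
    {D : ℕ → Ω → ℝ} (hD : MartingaleUpTo μ ℱ T D) (hD0 : ∀ ω, 0 ≤ D T ω)
    (h_one : ∀ ω, D 0 ω = 1) :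
    IsProbabilityMeasure (μ.withDensity fun ω => ENNReal.ofReal (D T ω)) := by
  have hDT : ∫ ω, D T ω ∂μ = 1 := by
    simpa [h_one] using hD.setIntegral_mul_eq (g := 1) stronglyMeasurable_const
      MeasurableSet.univ T.zero_le le_rfl
  constructor
  rw [withDensity_apply _ MeasurableSet.univ, Measure.restrict_univ,
    ← ofReal_integral_eq_lintegral_ofReal .of_finite (ae_of_all _ hD0), hDT, ENNReal.ofReal_one]

/-- Bayes' formula for the density process `D` of `D_T · μ`. -/
theorem MartingaleUpTo.withDensity_of_mul {D X : ℕ → Ω → ℝ} (hD : MartingaleUpTo μ ℱ T D)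
    (hD0 : ∀ ω, 0 ≤ D T ω) (hX : Adapted ℱ X)
    (hXD : MartingaleUpTo μ ℱ T fun t ω => X t ω * D t ω) :
    MartingaleUpTo (μ.withDensity fun ω => ENNReal.ofReal (D T ω)) ℱ T X := by
  intro t ht
  have : IsFiniteMeasure (μ.withDensity fun ω => ENNReal.ofReal (D T ω)) :=
    isFiniteMeasure_withDensity_ofReal Integrable.of_finite.hasFiniteIntegral
  refine (ae_eq_condExp_of_forall_setIntegral_eq (ℱ.le t) .of_finite
    (fun _ _ _ => Integrable.of_finite.integrableOn) (fun A hA _ => ?_)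
    (hX t).stronglyMeasurable.aestronglyMeasurable).symm
  have hA0 : MeasurableSet A := ℱ.le t A hA
  have hDm : Measurable (D T) := .of_discrete
  calc ∫ ω in A, X t ω ∂(μ.withDensity fun ω => ENNReal.ofReal (D T ω))
      = ∫ ω in A, X t ω * D T ω ∂μ := setIntegral_withDensity_ofReal hDm hD0 _ hA0
    _ = ∫ ω in A, X t ω * D t ω ∂μ := hD.setIntegral_mul_eq (hX t).stronglyMeasurable hA ht.le le_rfl
    _ = ∫ ω in A, X (t + 1) ω * D (t + 1) ω ∂μ :=
      (setIntegral_eq_of_condExp_ae_eq (ℱ.le t) (hXD t ht) hA).symm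
    _ = ∫ ω in A, X (t + 1) ω * D T ω ∂μ :=
      (hD.setIntegral_mul_eq (hX (t + 1)).stronglyMeasurable (ℱ.mono t.le_succ A hA) ht le_rfl).symm
    _ = ∫ ω in A, X (t + 1) ω ∂(μ.withDensity fun ω => ENNReal.ofReal (D T ω)) :=
      (setIntegral_withDensity_ofReal hDm hD0 _ hA0).symm

end FiniteSpace

theorem cps_to_emt_general
    {Ω : Type*} [Fintype Ω] {m0 : MeasurableSpace Ω}
    [MeasurableSingletonClass Ω]
    (ℱ : Filtration ℕ m0) (T : ℕ)
    (Q : Measure Ω) [IsProbabilityMeasure Q]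
    (Sb Sa Rd Rc : ℕ → Ω → ℝ)
    (hRd : ∀ t ω, 0 < Rd t ω)
    (ZR ZS : ℕ → Ω → ℝ) (R : ℕ → Ω → ℝ)
    (hZRadapt : Adapted ℱ ZR) (hZSadapt : Adapted ℱ ZS)
    (hZpos : ∀ t ω, 0 < ZR t ω ∧ 0 < ZS t ω)
    (hwedge : ∀ t ≤ T, ∀ ω, Sb t ω ≤ ZS t ω / ZR t ω ∧ ZS t ω / ZR t ω ≤ Sa t ω)
    (hR0 : StronglyMeasurable[ℱ 0] (R 0))
    (hRpred : ∀ t, StronglyMeasurable[ℱ t] (R (t + 1)))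
    (hRbd : ∀ t ≤ T, ∀ ω, Rd t ω ≤ R t ω ∧ R t ω ≤ Rc t ω)
    -- Z^S is a Q-martingale
    (hZSmart : ∀ t < T, Q[ZS (t + 1)|ℱ t] =ᵐ[Q] ZS t)
    -- B Z^R is a Q-martingale
    (hBZRmart : ∀ t < T,
      Q[fun ω => (∏ s ∈ Finset.range (t + 2), R s ω) * ZR (t + 1) ω|ℱ t]
        =ᵐ[Q] fun ω => (∏ s ∈ Finset.range (t + 1), R s ω) * ZR t ω)
    -- normalisation
    (hnorm : ∀ ω, R 0 ω * ZR 0 ω = 1) :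
    ∀ P : Measure Ω,
      P = (Q.withDensity fun ω =>
        ENNReal.ofReal ((∏ s ∈ Finset.range (T + 1), R s ω) * ZR T ω)) →
      IsProbabilityMeasure P ∧ P ≪ Q ∧ Q ≪ P ∧
      (∀ t ≤ T, ∀ ω,
        Sb t ω ≤ ZS t ω / ZR t ω ∧ ZS t ω / ZR t ω ≤ Sa t ω ∧
        Rd t ω ≤ R t ω ∧ R t ω ≤ Rc t ω) ∧
      -- S/B is a P-martingale
      (∀ t < T,
        P[fun ω => (ZS (t + 1) ω / ZR (t + 1) ω) / ∏ s ∈ Finset.range (t + 2), R s ω|ℱ t]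
          =ᵐ[P] fun ω => (ZS t ω / ZR t ω) / ∏ s ∈ Finset.range (t + 1), R s ω) := by
  rintro P rfl
  have hBpos : ∀ t ≤ T, ∀ ω, 0 < deflator R t ω :=
    deflator_pos fun t ht ω => (hRd t ω).trans_le (hRbd t ht ω).1
  have hD : MartingaleUpTo Q ℱ T fun t ω => deflator R t ω * ZR t ω := hBZRmart
  have hDpos : ∀ ω, 0 < deflator R T ω * ZR T ω := fun ω =>
    mul_pos (hBpos T le_rfl ω) (hZpos T ω).1
  have hX : Adapted ℱ fun t ω => ZS t ω / ZR t ω / deflator R t ω := fun t =>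
    ((hZSadapt t).div (hZRadapt t)).div (adapted_deflator hR0 hRpred t)
  have hXD : MartingaleUpTo Q ℱ T fun t ω => ZS t ω / ZR t ω / deflator R t ω *
      (deflator R t ω * ZR t ω) := by
    have h_eq : ∀ t ≤ T, (fun ω => ZS t ω / ZR t ω / deflator R t ω *
        (deflator R t ω * ZR t ω)) = ZS t := fun t ht => funext fun ω => by
      field_simp [(hBpos t ht ω).ne', (hZpos t ω).1.ne']
    intro t ht
    simpa only [h_eq t ht.le, h_eq (t + 1) ht] using hZSmart t ht
  have hP := hD.isProbabilityMeasure_withDensity (fun ω => (hDpos ω).le)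
    fun ω => by simp [deflator, hnorm]
  refine ⟨hP, withDensity_absolutelyContinuous _ _,
    withDensity_absolutelyContinuous' Measurable.of_discrete.aemeasurable
      (ae_of_all _ fun ω => (ENNReal.ofReal_pos.2 (hDpos ω)).ne'),
    fun t ht ω => ⟨(hwedge t ht ω).1, (hwedge t ht ω).2, (hRbd t ht ω).1, (hRbd t ht ω).2⟩,
    hD.withDensity_of_mul (fun ω => (hDpos ω).le) hX hXD⟩

/-- From a consistent pricing system `(Z^R, Z^S)` with associated rate process `R`
and deflator `B`, the measure `P({ω}) = B_T(ω) Z^R_T(ω) Q({ω})` and the price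
`S_t = Z^S_t / Z^R_t` form an equivalent martingale triple. -/
theorem cps_to_emt
    {Ω : Type*} [Fintype Ω] [Nonempty Ω] {m0 : MeasurableSpace Ω}
    [MeasurableSingletonClass Ω]
    (ℱ : Filtration ℕ m0) (T : ℕ) (hℱ0 : (ℱ 0 : MeasurableSpace Ω) = ⊥)
    (Q : Measure Ω) [IsProbabilityMeasure Q] (hQfull : ∀ ω, 0 < Q {ω})
    (Sb Sa Rd Rc : ℕ → Ω → ℝ)
    (hSb : ∀ t ω, 0 < Sb t ω) (hba : ∀ t ω, Sb t ω ≤ Sa t ω)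
    (hRd : ∀ t ω, 0 < Rd t ω) (hdc : ∀ t ω, Rd t ω ≤ Rc t ω)
    (ZR ZS : ℕ → Ω → ℝ) (R : ℕ → Ω → ℝ)
    (hZRadapt : Adapted ℱ ZR) (hZSadapt : Adapted ℱ ZS)
    (hZpos : ∀ t ω, 0 < ZR t ω ∧ 0 < ZS t ω)
    (hwedge : ∀ t ≤ T, ∀ ω, Sb t ω ≤ ZS t ω / ZR t ω ∧ ZS t ω / ZR t ω ≤ Sa t ω)
    (hR0 : StronglyMeasurable[ℱ 0] (R 0))
    (hRpred : ∀ t, StronglyMeasurable[ℱ t] (R (t + 1)))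
    (hRbd : ∀ t ≤ T, ∀ ω, Rd t ω ≤ R t ω ∧ R t ω ≤ Rc t ω)
    -- Z^S is a Q-martingale
    (hZSmart : ∀ t < T, Q[ZS (t + 1)|ℱ t] =ᵐ[Q] ZS t)
    -- B Z^R is a Q-martingale
    (hBZRmart : ∀ t < T,
      Q[fun ω => (∏ s ∈ Finset.range (t + 2), R s ω) * ZR (t + 1) ω|ℱ t]
        =ᵐ[Q] fun ω => (∏ s ∈ Finset.range (t + 1), R s ω) * ZR t ω)
    -- normalisation
    (hnorm : ∀ ω, R 0 ω * ZR 0 ω = 1) :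
    ∀ P : Measure Ω,
      P = (Q.withDensity fun ω =>
        ENNReal.ofReal ((∏ s ∈ Finset.range (T + 1), R s ω) * ZR T ω)) →
      IsProbabilityMeasure P ∧ P ≪ Q ∧ Q ≪ P ∧
      (∀ t ≤ T, ∀ ω,
        Sb t ω ≤ ZS t ω / ZR t ω ∧ ZS t ω / ZR t ω ≤ Sa t ω ∧
        Rd t ω ≤ R t ω ∧ R t ω ≤ Rc t ω) ∧
      -- S/B is a P-martingale
      (∀ t < T,
        P[fun ω => (ZS (t + 1) ω / ZR (t + 1) ω) / ∏ s ∈ Finset.range (t + 2), R s ω|ℱ t]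
          =ᵐ[P] fun ω => (ZS t ω / ZR t ω) / ∏ s ∈ Finset.range (t + 1), R s ω) :=
  cps_to_emt_general ℱ T Q Sb Sa Rd Rc hRd ZR ZS R hZRadapt hZSadapt hZpos hwedge hR0 hRpred hRbd
    hZSmart hBZRmart hnorm
end

section
/- Let A ⊂ ℝ^n be a polyhedral convex cone and L⁺ the convex hull of the standard basis vectors of ℝ^n. If A ∩ L⁺ = ∅, then there exists a vector w ∈ ℝ^n with all coordinates strictly positive such that w · a ≤ 0 for all a ∈ A. -/
/-!
The polyhedral cone `A = {x | ∀ i, 0 ≤ f i x}` is the dual cone of `{f i}`, hence a closed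
pointed cone, and Hahn–Banach strongly separates it from the compact convex simplex `L⁺`.
A functional bounded above on a cone through `0` is `≤ 0` on it, and the separating functional
is positive on every vertex `e_i` of `L⁺`; its coordinates `g e_i` form `w`.
-/

open Set

theorem PointedCone.hyperplane_separation_of_isCompact
    {E : Type*} [AddCommGroup E] [Module ℝ E] [TopologicalSpace E] [IsTopologicalAddGroup E]
    [ContinuousSMul ℝ E] [LocallyConvexSpace ℝ E]
    (C : PointedCone ℝ E) (hC : IsClosed (C : Set E)) {K : Set E} (hKconv : Convex ℝ K)
    (hKcpt : IsCompact K) (hdisj : Disjoint (C : Set E) K) :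
    ∃ g : StrongDual ℝ E, (∀ x ∈ C, g x ≤ 0) ∧ ∀ y ∈ K, 0 < g y := by
  obtain ⟨g, u, v, hgC, huv, hgK⟩ :=
    geometric_hahn_banach_closed_compact C.convex hC hKconv hKcpt hdisj
  have hu : 0 < u := by simpa using hgC 0 C.zero_mem
  refine ⟨g, fun x hx => ?_, fun y hy => by linarith [hgK y hy]⟩
  by_contra! hgx
  -- rescaling `x` by `u / g x` stays in `C` and raises `g` to `u`
  have hscaled := hgC _ (C.smul_mem (div_pos hu hgx).le hx)
  rw [map_smul, smul_eq_mul, div_mul_cancel₀ _ hgx.ne'] at hscaled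
  exact hscaled.false

theorem LinearMap.apply_eq_sum_apply_single_mul {ι R : Type*} [Fintype ι] [DecidableEq ι]
    [CommSemiring R] (g : (ι → R) →ₗ[R] R) (a : ι → R) :
    g a = ∑ i, g (Pi.single i 1) * a i := by
  conv_lhs => rw [pi_eq_sum_univ' a]
  simp [mul_comm]

/-- Separation of a polyhedral convex cone `A` from the convex hull `L⁺` of the
standard basis vectors: if `A ∩ L⁺ = ∅`, then there is a strictly positive vector `w`
with `w · a ≤ 0` for all `a ∈ A`. -/
theorem polyhedral_cone_separation (n : ℕ) (A : Set (Fin n → ℝ))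
    (hA : ∃ (k : ℕ) (f : Fin k → (Fin n → ℝ) →ₗ[ℝ] ℝ),
      A = {x | ∀ i, 0 ≤ f i x})
    (hdisj : A ∩ convexHull ℝ (Set.range fun i : Fin n => Pi.single i (1 : ℝ)) = ∅) :
    ∃ w : Fin n → ℝ, (∀ i, 0 < w i) ∧ ∀ a ∈ A, ∑ i, w i * a i ≤ 0 := by
  obtain ⟨k, f, rfl⟩ := hA
  let C : PointedCone ℝ (Fin n → ℝ) := PointedCone.dual LinearMap.id (range f)
  have hC : (C : Set (Fin n → ℝ)) = {x | ∀ i, 0 ≤ f i x} := by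
    ext x; simp [C]
  have hC_closed : IsClosed (C : Set (Fin n → ℝ)) :=
    PointedCone.isClosed_dual fun φ => φ.continuous_of_finiteDimensional
  obtain ⟨g, hgC, hgL⟩ := C.hyperplane_separation_of_isCompact hC_closed
    (convex_convexHull ℝ _) ((finite_range _).isCompact_convexHull (𝕜 := ℝ))
    (hC ▸ disjoint_iff_inter_eq_empty.mpr hdisj)
  refine ⟨fun i => g (Pi.single i 1), fun i => hgL _ (subset_convexHull ℝ _ ⟨i, rfl⟩),
    fun a ha => ?_⟩
  have hga := hgC a (by rwa [← SetLike.mem_coe, hC])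
  rwa [← ContinuousLinearMap.coe_coe, LinearMap.apply_eq_sum_apply_single_mul] at hga
end

section
/- If Z^S is a strictly positive Q-martingale and B Z^R is a strictly positive Q-martingale (B predictable, positive), then under the measure P defined by dP/dQ = B_T Z^R_T / E_Q[B_T Z^R_T], the process S_t := Z^S_t / Z^R_t satisfies E_P[S_{t+1} | F_t] = R_{t+1} S_t for all t < T, where R_{t+1} = B_{t+1}/B_t. -/
/-!
Write `D_t = B_t Z^R_t`. As `D` is a `Q`-martingale, `D_t = E_Q[D_T | F_t]`, and by the Bayes
formula `E_P[X | F_t] = Y` for an `F_t`-measurable `Y` as soon as `∫_A Y D_T dQ = ∫_A X D_T dQ`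
for all `A ∈ F_t`. For `X = S_{t+1}` and `Y = R_{t+1} S_t` both integrals equal
`∫_A B_{t+1} Z^S_t dQ`: on the `Y` side because `R_{t+1} S_t D_t = B_{t+1} Z^S_t`; on the `X` side
because `S_{t+1} D_{t+1} = B_{t+1} Z^S_{t+1}`, `B_{t+1}` is `F_t`-measurable and `Z^S` is a
`Q`-martingale.
-/

open MeasureTheory Finset

section General

variable {Ω : Type*} {m m0 : MeasurableSpace Ω}

theorem stronglyMeasurable_prod_range_of_predictable {M : Type*} [CommMonoid M]
    [TopologicalSpace M] [ContinuousMul M] {ℱ : Filtration ℕ m0} {R : ℕ → Ω → M}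
    (hR0 : StronglyMeasurable[ℱ 0] (R 0)) (hR : ∀ t, StronglyMeasurable[ℱ t] (R (t + 1)))
    {n t : ℕ} (hn : n ≤ t + 2) : StronglyMeasurable[ℱ t] fun ω => ∏ s ∈ range n, R s ω := by
  refine stronglyMeasurable_fun_prod _ fun s hs => ?_
  rcases s with _ | u
  · exact hR0.mono (ℱ.mono (Nat.zero_le t))
  · exact (hR u).mono (ℱ.mono (by grind))

theorem condExp_ae_eq_of_condExp_succ_ae_eq {μ : Measure Ω} [IsFiniteMeasure μ]
    {ℱ : Filtration ℕ m0} {X : ℕ → Ω → ℝ} {T : ℕ}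
    (hXT : StronglyMeasurable[ℱ T] (X T)) (hint : Integrable (X T) μ)
    (hX : ∀ t < T, μ[X (t + 1)|ℱ t] =ᵐ[μ] X t) {k : ℕ} (hk : k ≤ T) :
    μ[X T|ℱ k] =ᵐ[μ] X k := by
  refine Nat.decreasingInduction (motive := fun k _ => μ[X T|ℱ k] =ᵐ[μ] X k) (fun k hk ih => ?_)
    (condExp_of_stronglyMeasurable (ℱ.le T) hXT hint).eventuallyEq hk
  calc μ[X T|ℱ k] =ᵐ[μ] μ[μ[X T|ℱ (k + 1)]|ℱ k] :=
        (condExp_condExp_of_le (ℱ.mono k.le_succ) (ℱ.le (k + 1))).symm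
    _ =ᵐ[μ] μ[X (k + 1)|ℱ k] := condExp_congr_ae ih
    _ =ᵐ[μ] X k := hX k hk

theorem setIntegral_mul_eq_of_condExp_ae_eq_s17 (hm : m ≤ m0)
    {μ : Measure Ω} [SigmaFinite (μ.trim hm)] {φ X Y : Ω → ℝ} (hφ : StronglyMeasurable[m] φ)
    (hφX : Integrable (φ * X) μ) (hX : Integrable X μ) (hXY : μ[X|m] =ᵐ[μ] Y) {s : Set Ω}
    (hs : MeasurableSet[m] s) : ∫ x in s, φ x * X x ∂μ = ∫ x in s, φ x * Y x ∂μ := by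
  calc ∫ x in s, φ x * X x ∂μ = ∫ x in s, (μ[φ * X|m]) x ∂μ := (setIntegral_condExp hm hφX hs).symm
    _ = ∫ x in s, φ x * Y x ∂μ := by
      refine setIntegral_congr_ae (hm s hs) ?_
      filter_upwards [condExp_mul_of_stronglyMeasurable_left hφ hφX hX, hXY] with x h1 h2 _
      rw [h1, Pi.mul_apply, h2]

theorem condExp_withDensity_ae_eq_of_setIntegral_mul_eq [Finite Ω] [MeasurableSingletonClass Ω]
    (hm : m ≤ m0) {μ : Measure Ω} [IsFiniteMeasure μ] {G f g : Ω → ℝ} (hG : ∀ ω, 0 ≤ G ω)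
    (hg : StronglyMeasurable[m] g)
    (hgf : ∀ s, MeasurableSet[m] s → ∫ x in s, g x * G x ∂μ = ∫ x in s, f x * G x ∂μ) :
    (μ.withDensity fun ω => ENNReal.ofReal (G ω / ∫ ω', G ω' ∂μ))[f|m]
      =ᵐ[μ.withDensity fun ω => ENNReal.ofReal (G ω / ∫ ω', G ω' ∂μ)] g := by
  set P := μ.withDensity fun ω => ENNReal.ofReal (G ω / ∫ ω', G ω' ∂μ)
  have : IsFiniteMeasure P := isFiniteMeasure_withDensity_ofReal Integrable.of_finite.2
  have hP (u : Ω → ℝ) (s : Set Ω) : ∫ x in s, u x ∂P = (∫ x in s, u x * G x ∂μ) / ∫ ω, G ω ∂μ := by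
    have hd : ∀ ω, 0 ≤ G ω / ∫ ω', G ω' ∂μ := fun ω => div_nonneg (hG ω) (integral_nonneg hG)
    rw [setIntegral_withDensity_eq_setIntegral_toReal_smul' s (measurable_of_finite _)
      (ae_of_all _ fun _ => ENNReal.ofReal_lt_top), ← integral_div]
    simp only [ENNReal.toReal_ofReal (hd _), smul_eq_mul, mul_div_assoc', mul_comm]
  refine (ae_eq_condExp_of_forall_setIntegral_eq hm .of_finite
    (fun _ _ _ => Integrable.of_finite.integrableOn) (fun s hs _ => ?_)
    hg.aestronglyMeasurable).symm
  rw [hP, hP, hgf s hs]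

end General

section Model

variable {Ω : Type*} [Finite Ω] {m0 : MeasurableSpace Ω} [MeasurableSingletonClass Ω]
  {ℱ : Filtration ℕ m0} {Q : Measure Ω} [IsFiniteMeasure Q] {R ZR ZS : ℕ → Ω → ℝ} {T t : ℕ}

/-- The bank account `B_t` of the paper. -/
def bankAccount (R : ℕ → Ω → ℝ) (t : ℕ) (ω : Ω) : ℝ := ∏ s ∈ range (t + 1), R s ω

theorem condExp_bankAccount_mul_ae_eq (hR0 : StronglyMeasurable[ℱ 0] (R 0))
    (hR : ∀ t, StronglyMeasurable[ℱ t] (R (t + 1))) (hZR : Adapted ℱ ZR)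
    (hBZR : ∀ t < T, Q[fun ω => bankAccount R (t + 1) ω * ZR (t + 1) ω|ℱ t]
      =ᵐ[Q] fun ω => bankAccount R t ω * ZR t ω) {k : ℕ} (hk : k ≤ T) :
    Q[fun ω => bankAccount R T ω * ZR T ω|ℱ k] =ᵐ[Q] fun ω => bankAccount R k ω * ZR k ω :=
  condExp_ae_eq_of_condExp_succ_ae_eq (X := fun k ω => bankAccount R k ω * ZR k ω)
    ((stronglyMeasurable_prod_range_of_predictable hR0 hR (by omega)).mul
      (hZR T).stronglyMeasurable) .of_finite hBZR hk

theorem setIntegral_forward_price_mul_eq (hR : StronglyMeasurable[ℱ t] (R (t + 1)))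
    (hZR : Adapted ℱ ZR) (hZS : Adapted ℱ ZS) (hZR0 : ∀ ω, ZR t ω ≠ 0)
    (hdensity : Q[fun ω => bankAccount R T ω * ZR T ω|ℱ t]
      =ᵐ[Q] fun ω => bankAccount R t ω * ZR t ω) {s : Set Ω} (hs : MeasurableSet[ℱ t] s) :
    ∫ x in s, R (t + 1) x * (ZS t x / ZR t x) * (bankAccount R T x * ZR T x) ∂Q
      = ∫ x in s, bankAccount R (t + 1) x * ZS t x ∂Q := by
  refine (setIntegral_mul_eq_of_condExp_ae_eq_s17 (ℱ.le t)
    (hR.mul ((hZS t).div (hZR t)).stronglyMeasurable) .of_finite .of_finite hdensity hs).trans ?_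
  refine setIntegral_congr_fun (ℱ.le t s hs) fun x _ => ?_
  simp only [bankAccount, prod_range_succ _ (t + 1), Pi.mul_apply, Pi.div_apply]
  field_simp [hZR0 x]

theorem setIntegral_next_price_mul_eq (hR0 : StronglyMeasurable[ℱ 0] (R 0))
    (hR : ∀ t, StronglyMeasurable[ℱ t] (R (t + 1))) (hZR : Adapted ℱ ZR) (hZS : Adapted ℱ ZS)
    (hZR0 : ∀ ω, ZR (t + 1) ω ≠ 0) (hZSmart : Q[ZS (t + 1)|ℱ t] =ᵐ[Q] ZS t)
    (hdensity : Q[fun ω => bankAccount R T ω * ZR T ω|ℱ (t + 1)]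
      =ᵐ[Q] fun ω => bankAccount R (t + 1) ω * ZR (t + 1) ω)
    {s : Set Ω} (hs : MeasurableSet[ℱ t] s) :
    ∫ x in s, ZS (t + 1) x / ZR (t + 1) x * (bankAccount R T x * ZR T x) ∂Q
      = ∫ x in s, bankAccount R (t + 1) x * ZS t x ∂Q := by
  calc ∫ x in s, ZS (t + 1) x / ZR (t + 1) x * (bankAccount R T x * ZR T x) ∂Q
      = ∫ x in s, ZS (t + 1) x / ZR (t + 1) x * (bankAccount R (t + 1) x * ZR (t + 1) x) ∂Q :=
        setIntegral_mul_eq_of_condExp_ae_eq_s17 (ℱ.le (t + 1))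
          ((hZS (t + 1)).div (hZR (t + 1))).stronglyMeasurable .of_finite .of_finite
          hdensity (ℱ.mono t.le_succ s hs)
    _ = ∫ x in s, bankAccount R (t + 1) x * ZS (t + 1) x ∂Q := by
        refine setIntegral_congr_fun (ℱ.le t s hs) fun x _ => ?_
        field_simp [hZR0 x]
    _ = ∫ x in s, bankAccount R (t + 1) x * ZS t x ∂Q :=
        setIntegral_mul_eq_of_condExp_ae_eq_s17 (ℱ.le t)
          (stronglyMeasurable_prod_range_of_predictable hR0 hR le_rfl) .of_finite .of_finite
          hZSmart hs

end Model

theorem change_of_measure_martingale_general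
    {Ω : Type*} [Fintype Ω] {m0 : MeasurableSpace Ω}
    [MeasurableSingletonClass Ω]
    (ℱ : Filtration ℕ m0) (T : ℕ)
    (Q : Measure Ω) [IsProbabilityMeasure Q]
    (ZR ZS R : ℕ → Ω → ℝ)
    (hZRadapt : Adapted ℱ ZR) (hZSadapt : Adapted ℱ ZS)
    (hZpos : ∀ t ω, 0 < ZR t ω ∧ 0 < ZS t ω)
    (hR0 : StronglyMeasurable[ℱ 0] (R 0))
    (hRpred : ∀ t, StronglyMeasurable[ℱ t] (R (t + 1)))
    (hRpos : ∀ t ω, 0 < R t ω)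
    (hZSmart : ∀ t < T, Q[ZS (t + 1)|ℱ t] =ᵐ[Q] ZS t)
    (hBZRmart : ∀ t < T,
      Q[fun ω => (∏ s ∈ Finset.range (t + 2), R s ω) * ZR (t + 1) ω|ℱ t]
        =ᵐ[Q] fun ω => (∏ s ∈ Finset.range (t + 1), R s ω) * ZR t ω) :
    ∀ P : Measure Ω,
      P = (Q.withDensity fun ω =>
        ENNReal.ofReal (((∏ s ∈ Finset.range (T + 1), R s ω) * ZR T ω) /
          ∫ ω', (∏ s ∈ Finset.range (T + 1), R s ω') * ZR T ω' ∂Q)) →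
      ∀ t < T,
        P[fun ω => ZS (t + 1) ω / ZR (t + 1) ω|ℱ t]
          =ᵐ[P] fun ω => R (t + 1) ω * (ZS t ω / ZR t ω) := by
  rintro P rfl t ht
  have hZR0 : ∀ k ω, ZR k ω ≠ 0 := fun k ω => (hZpos k ω).1.ne'
  have hdensity {k : ℕ} (hk : k ≤ T) :=
    condExp_bankAccount_mul_ae_eq hR0 hRpred hZRadapt hBZRmart hk
  refine condExp_withDensity_ae_eq_of_setIntegral_mul_eq (ℱ.le t)
    (fun ω => (mul_pos (prod_pos fun s _ => hRpos s ω) (hZpos T ω).1).le)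
    ((hRpred t).mul ((hZSadapt t).div (hZRadapt t)).stronglyMeasurable) (fun s hs => ?_)
  exact (setIntegral_forward_price_mul_eq (hRpred t) hZRadapt hZSadapt (hZR0 t) (hdensity ht.le)
    hs).trans (setIntegral_next_price_mul_eq hR0 hRpred hZRadapt hZSadapt (hZR0 (t + 1))
      (hZSmart t ht) (hdensity ht) hs).symm

/-- If `Z^S` and `B Z^R` are strictly positive `Q`-martingales, then under
`dP/dQ = B_T Z^R_T / E_Q[B_T Z^R_T]` the process `S_t = Z^S_t / Z^R_t` satisfies
`E_P[S_{t+1}|F_t] = R_{t+1} S_t` for `t < T`. -/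
theorem change_of_measure_martingale
    {Ω : Type*} [Fintype Ω] [Nonempty Ω] {m0 : MeasurableSpace Ω}
    [MeasurableSingletonClass Ω]
    (ℱ : Filtration ℕ m0) (T : ℕ) (hℱ0 : (ℱ 0 : MeasurableSpace Ω) = ⊥)
    (Q : Measure Ω) [IsProbabilityMeasure Q] (hQfull : ∀ ω, 0 < Q {ω})
    (ZR ZS R : ℕ → Ω → ℝ)
    (hZRadapt : Adapted ℱ ZR) (hZSadapt : Adapted ℱ ZS)
    (hZpos : ∀ t ω, 0 < ZR t ω ∧ 0 < ZS t ω)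
    (hR0 : StronglyMeasurable[ℱ 0] (R 0))
    (hRpred : ∀ t, StronglyMeasurable[ℱ t] (R (t + 1)))
    (hRpos : ∀ t ω, 0 < R t ω)
    (hZSmart : ∀ t < T, Q[ZS (t + 1)|ℱ t] =ᵐ[Q] ZS t)
    (hBZRmart : ∀ t < T,
      Q[fun ω => (∏ s ∈ Finset.range (t + 2), R s ω) * ZR (t + 1) ω|ℱ t]
        =ᵐ[Q] fun ω => (∏ s ∈ Finset.range (t + 1), R s ω) * ZR t ω)
    -- normalisation E_Q[B_T Z^R_T] = B_0 Z^R_0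
    (hnorm : ∀ ω, (∫ ω', (∏ s ∈ Finset.range (T + 1), R s ω') * ZR T ω' ∂Q)
      = R 0 ω * ZR 0 ω) :
    ∀ P : Measure Ω,
      P = (Q.withDensity fun ω =>
        ENNReal.ofReal (((∏ s ∈ Finset.range (T + 1), R s ω) * ZR T ω) /
          ∫ ω', (∏ s ∈ Finset.range (T + 1), R s ω') * ZR T ω' ∂Q)) →
      ∀ t < T,
        P[fun ω => ZS (t + 1) ω / ZR (t + 1) ω|ℱ t]
          =ᵐ[P] fun ω => R (t + 1) ω * (ZS t ω / ZR t ω) :=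
  change_of_measure_martingale_general ℱ T Q ZR ZS R hZRadapt hZSadapt hZpos hR0 hRpred hRpos
    hZSmart hBZRmart
end

section
/- Every generalised trading strategy (α,β,γ,δ) (a strategy with explicit consumption: ϱ_t(α_t) ≥ γ_t, β_t ≥ δ_t, and ϑ_t(γ_t − α_{t+1}, δ_t − β_{t+1}) ≥ 0 for all t) is dominated by a self-financing strategy (ε,η) ∈ Φ with ε_0 = α_0, η = β, and ε_t ≥ α_t for all t ∈ {0,...,T+1}, constructed by ε_{t+1} = ϑ_t(ϱ_t(ε_t), η_{t+1} − η_t). -/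
open MeasureTheory

/-!
Keep the stock position `β` and carry every unit of cash forward through the money market,
`ε_{t+1} = ϱ_t(ε_t) + ϑ_t(0, β_t − β_{t+1})`. Both `ϱ_t` and `x ↦ ϑ_t(0, x)` are nondecreasing,
because the long price never exceeds the short price. The generalised strategy obeys
`α_{t+1} ≤ γ_t + ϑ_t(0, δ_t − β_{t+1}) ≤ ϱ_t(α_t) + ϑ_t(0, β_t − β_{t+1})`, so `α` is a
subsolution of the same monotone recursion that `ε` solves with equality, and `α ≤ ε` follows by
induction from `α_0 = ε_0`.
-/

/-- `ϱ_t(x)` is `spreadValue (R^d_t) (R^c_t) x` and `ϑ_t(0, x)` is `spreadValue (S^b_t) (S^a_t) x`. -/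
def spreadValue (lo hi x : ℝ) : ℝ :=
  max x 0 * lo - max (-x) 0 * hi

theorem spreadValue_monotone {lo hi : ℝ} (hlo : 0 ≤ lo) (hlohi : lo ≤ hi) :
    Monotone (spreadValue lo hi) := by
  intro x y hxy
  unfold spreadValue
  rcases le_total x 0 with hx | hx <;> rcases le_total y 0 with hy | hy <;>
    simp only [max_eq_left, max_eq_right, hx, hy, neg_nonneg, neg_nonpos] <;>
    nlinarith

theorem seq_le_seq_of_monotone_steps {α : Type*} [Preorder α] {f : ℕ → α → α} {x y : ℕ → α}
    (n : ℕ) (hf : ∀ k < n, Monotone (f k)) (h₀ : x 0 ≤ y 0)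
    (hx : ∀ k < n, x (k + 1) ≤ f k (x k)) (hy : ∀ k < n, f k (y k) ≤ y (k + 1)) :
    x n ≤ y n := by
  induction n with
  | zero => exact h₀
  | succ n ih =>
    have hxy : x n ≤ y n :=
      ih (fun k hk => hf k (hk.trans n.lt_succ_self)) (fun k hk => hx k (hk.trans n.lt_succ_self))
        (fun k hk => hy k (hk.trans n.lt_succ_self))
    exact (hx n n.lt_succ_self).trans ((hf n n.lt_succ_self hxy).trans (hy n n.lt_succ_self))

section CashAccount

variable {Ω : Type*} (Sb Sa Rd Rc β : ℕ → Ω → ℝ)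

def cashStep (t : ℕ) (e : ℝ) (ω : Ω) : ℝ :=
  spreadValue (Rd t ω) (Rc t ω) e + spreadValue (Sb t ω) (Sa t ω) (β t ω - β (t + 1) ω)

def cashAccount (a : Ω → ℝ) : ℕ → Ω → ℝ
  | 0 => a
  | t + 1 => fun ω => cashStep Sb Sa Rd Rc β t (cashAccount a t ω) ω

variable {Sb Sa Rd Rc}

theorem cashStep_monotone {t : ℕ} {ω : Ω} (hRd : 0 ≤ Rd t ω) (hdc : Rd t ω ≤ Rc t ω) :
    Monotone fun e => cashStep Sb Sa Rd Rc β t e ω := by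
  intro x y hxy
  simpa only [cashStep, add_le_add_iff_right] using
    spreadValue_monotone hRd hdc hxy

end CashAccount

theorem generalised_strategy_dominated_general
    {Ω : Type*} (T : ℕ)
    (Sb Sa Rd Rc : ℕ → Ω → ℝ)
    (hSb : ∀ t ω, 0 < Sb t ω) (hba : ∀ t ω, Sb t ω ≤ Sa t ω)
    (hRd : ∀ t ω, 0 < Rd t ω) (hdc : ∀ t ω, Rd t ω ≤ Rc t ω)
    (α β γ δ : ℕ → Ω → ℝ)
    -- consumption constraints: ϱ_t(α_t) ≥ γ_t and β_t ≥ δ_t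
    (hγ : ∀ t ≤ T, ∀ ω, γ t ω ≤ max (α t ω) 0 * Rd t ω - max (-(α t ω)) 0 * Rc t ω)
    (hδ : ∀ t ≤ T, ∀ ω, δ t ω ≤ β t ω)
    -- ϑ_t(γ_t − α_{t+1}, δ_t − β_{t+1}) ≥ 0
    (hϑ : ∀ t ≤ T, ∀ ω,
      0 ≤ (γ t ω - α (t + 1) ω) + max (δ t ω - β (t + 1) ω) 0 * Sb t ω
        - max (-(δ t ω - β (t + 1) ω)) 0 * Sa t ω) :
    ∃ ε : ℕ → Ω → ℝ,
      ε 0 = α 0 ∧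
      -- construction: ε_{t+1} = ϑ_t(ϱ_t(ε_t), β_t − β_{t+1})
      (∀ t ≤ T, ∀ ω, ε (t + 1) ω =
        (max (ε t ω) 0 * Rd t ω - max (-(ε t ω)) 0 * Rc t ω)
          + max (β t ω - β (t + 1) ω) 0 * Sb t ω
          - max (-(β t ω - β (t + 1) ω)) 0 * Sa t ω) ∧
      -- (ε, β) is self-financing
      (∀ t ≤ T, ∀ ω,
        0 ≤ (max (ε t ω) 0 * Rd t ω - max (-(ε t ω)) 0 * Rc t ω - ε (t + 1) ω)
          + max (β t ω - β (t + 1) ω) 0 * Sb t ω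
          - max (-(β t ω - β (t + 1) ω)) 0 * Sa t ω) ∧
      -- domination
      (∀ t ≤ T + 1, ∀ ω, α t ω ≤ ε t ω) := by
  set ε := cashAccount Sb Sa Rd Rc β (α 0)
  have hε : ∀ t ω, ε (t + 1) ω = cashStep Sb Sa Rd Rc β t (ε t ω) ω := fun _ _ => rfl
  have hα : ∀ t ≤ T, ∀ ω, α (t + 1) ω ≤ cashStep Sb Sa Rd Rc β t (α t ω) ω := by
    intro t ht ω
    have hstock := spreadValue_monotone (hSb t ω).le (hba t ω)
      (sub_le_sub_right (hδ t ht ω) (β (t + 1) ω))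
    simp only [cashStep, spreadValue] at hstock ⊢
    linarith [hγ t ht ω, hϑ t ht ω]
  refine ⟨ε, rfl, fun t _ ω => ?_, fun t _ ω => ?_, fun t ht ω => ?_⟩
  · simp only [hε, cashStep, spreadValue]
    ring
  · simp only [hε, cashStep, spreadValue]
    linarith
  · exact seq_le_seq_of_monotone_steps (x := fun t => α t ω) (y := fun t => ε t ω) t
      (fun k _ => cashStep_monotone β (hRd k ω).le (hdc k ω)) le_rfl
      (fun k hk => hα k (by omega) ω) (fun k _ => (hε k ω).ge)

/-- Every generalised trading strategy `(α, β, γ, δ)` is dominated by a self-financing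
strategy `(ε, η)` with `ε_0 = α_0`, `η = β`, and `ε_t ≥ α_t` for all `t`, constructed
via `ε_{t+1} = ϑ_t(ϱ_t(ε_t), η_t − η_{t+1})`. -/
theorem generalised_strategy_dominated
    {Ω : Type*} [Fintype Ω] {m0 : MeasurableSpace Ω}
    (ℱ : Filtration ℕ m0) (T : ℕ)
    (Sb Sa Rd Rc : ℕ → Ω → ℝ)
    (hSb : ∀ t ω, 0 < Sb t ω) (hba : ∀ t ω, Sb t ω ≤ Sa t ω)
    (hRd : ∀ t ω, 0 < Rd t ω) (hdc : ∀ t ω, Rd t ω ≤ Rc t ω)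
    (α β γ δ : ℕ → Ω → ℝ)
    (hβ0 : β 0 = 0)
    (hpred : ∀ t ≤ T, StronglyMeasurable[ℱ t] (α (t + 1)) ∧
      StronglyMeasurable[ℱ t] (β (t + 1)))
    (hadapt : ∀ t ≤ T, StronglyMeasurable[ℱ t] (γ t) ∧ StronglyMeasurable[ℱ t] (δ t))
    -- consumption constraints: ϱ_t(α_t) ≥ γ_t and β_t ≥ δ_t
    (hγ : ∀ t ≤ T, ∀ ω, γ t ω ≤ max (α t ω) 0 * Rd t ω - max (-(α t ω)) 0 * Rc t ω)
    (hδ : ∀ t ≤ T, ∀ ω, δ t ω ≤ β t ω)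
    -- ϑ_t(γ_t − α_{t+1}, δ_t − β_{t+1}) ≥ 0
    (hϑ : ∀ t ≤ T, ∀ ω,
      0 ≤ (γ t ω - α (t + 1) ω) + max (δ t ω - β (t + 1) ω) 0 * Sb t ω
        - max (-(δ t ω - β (t + 1) ω)) 0 * Sa t ω) :
    ∃ ε : ℕ → Ω → ℝ,
      ε 0 = α 0 ∧
      -- construction: ε_{t+1} = ϑ_t(ϱ_t(ε_t), β_t − β_{t+1})
      (∀ t ≤ T, ∀ ω, ε (t + 1) ω =
        (max (ε t ω) 0 * Rd t ω - max (-(ε t ω)) 0 * Rc t ω)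
          + max (β t ω - β (t + 1) ω) 0 * Sb t ω
          - max (-(β t ω - β (t + 1) ω)) 0 * Sa t ω) ∧
      -- (ε, β) is self-financing
      (∀ t ≤ T, ∀ ω,
        0 ≤ (max (ε t ω) 0 * Rd t ω - max (-(ε t ω)) 0 * Rc t ω - ε (t + 1) ω)
          + max (β t ω - β (t + 1) ω) 0 * Sb t ω
          - max (-(β t ω - β (t + 1) ω)) 0 * Sa t ω) ∧
      -- domination
      (∀ t ≤ T + 1, ∀ ω, α t ω ≤ ε t ω) :=
  generalised_strategy_dominated_general T Sb Sa Rd Rc hSb hba hRd hdc α β γ δ hγ hδ hϑ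
end
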